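/- arXiv:2303.00147 — 6 statements merged into one kernel-verified Lean document; each statement's English description precedes it below -/
import Mathlib

section
/- The number of binary sequences of length n containing exactly ℓ ones (with 2 ≤ ℓ ≤ n) that avoid the consecutive pattern 0,1,0 is at least the binomial coefficient C(n − ⌈ℓ/2⌉, ⌊ℓ/2⌋). -/
/-!
Pick `⌊ℓ/2⌋` of the `n - ⌈ℓ/2⌉` letters of a word, replace each picked letter by the block `11`
and every other letter by `0`, and if `ℓ` is odd append one further `1`. The result has length
`n` and `ℓ` ones; it never contains `010` because every `1` lies in a block of at least two ones
or at the very end; and the picked positions can be read back off the sequence, since `0` and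
`11` form a prefix code.
-/

namespace Pattern010

def Avoids010 (l : List Bool) : Prop :=
  ∀ i, ¬ (l[i]? = some false ∧ l[i + 1]? = some true ∧ l[i + 2]? = some false)

lemma avoids010_replicate_true (r : ℕ) : Avoids010 (List.replicate r true) := by
  rintro i ⟨h, -, -⟩
  simp [List.getElem?_replicate] at h

lemma Avoids010.true_cons_true_cons {l : List Bool} (h : Avoids010 l) :
    Avoids010 (true :: true :: l) := by
  rintro (_ | _ | i)
  · simp
  · simp
  · simpa using h i

lemma Avoids010.false_cons {l : List Bool} (h : Avoids010 l)
    (hl : ¬ (l[0]? = some true ∧ l[1]? = some false)) : Avoids010 (false :: l) := by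
  rintro (_ | i)
  · simpa using hl
  · simpa using h i

def doubleOnes (w : List Bool) : List Bool :=
  w.flatMap fun b => if b then [true, true] else [false]

@[simp]
lemma doubleOnes_nil : doubleOnes [] = [] := rfl

@[simp]
lemma doubleOnes_cons (b : Bool) (w : List Bool) :
    doubleOnes (b :: w) = (if b then [true, true] else [false]) ++ doubleOnes w := rfl

lemma length_doubleOnes (w : List Bool) :
    (doubleOnes w).length = w.length + w.count true := by
  induction w with
  | nil => rfl
  | cons b w ih => cases b <;> (simp [ih]; try omega)

lemma count_true_doubleOnes (w : List Bool) :
    (doubleOnes w).count true = 2 * w.count true := by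
  induction w with
  | nil => rfl
  | cons b w ih => cases b <;> (simp [ih]; try omega)

lemma doubleOnes_injective : Function.Injective doubleOnes := by
  intro w
  induction w with
  | nil =>
    rintro (_ | ⟨b, w'⟩) h
    · rfl
    · cases b <;> simp at h
  | cons b w ih =>
    rintro (_ | ⟨b', w'⟩) h
    · cases b <;> simp at h
    · cases b <;> cases b' <;> simp at h
      all_goals rw [ih h]

lemma avoids010_doubleOnes_append_replicate (w : List Bool) (r : ℕ) :
    Avoids010 (doubleOnes w ++ List.replicate r true) := by
  induction w with
  | nil => simpa using avoids010_replicate_true r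
  | cons b w ih =>
    cases b
    · refine ih.false_cons ?_
      rcases w with _ | ⟨_ | _, w⟩ <;> rcases r with _ | _ | r <;> simp
    · exact ih.true_cons_true_cons

lemma count_true_ofFn {n : ℕ} (f : Fin n → Bool) :
    (List.ofFn f).count true = (Finset.univ.filter fun i => f i = true).card := by
  rw [Finset.card_filter]
  induction n with
  | zero => simp
  | succ n ih =>
    rw [Fin.sum_univ_succ, List.ofFn_succ, List.count_cons, ih]
    cases f 0 <;> simp [add_comm]

lemma ofFn_getD_of_length_eq {α : Type*} {n : ℕ} {l : List α} (d : α) (h : l.length = n) :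
    List.ofFn (fun i : Fin n => l.getD i d) = l := by
  subst h
  simp

def avoiding010 (n ℓ : ℕ) : Set (Fin n → Bool) :=
  {s | (Finset.univ.filter (fun i => s i = true)).card = ℓ ∧
    ¬ ∃ i : ℕ, ∃ h : i + 2 < n,
      s ⟨i, by omega⟩ = false ∧ s ⟨i + 1, by omega⟩ = true ∧ s ⟨i + 2, h⟩ = false}

lemma getD_mem_avoiding010 {n : ℕ} {l : List Bool} (hl : Avoids010 l) (hlen : l.length = n) :
    (fun i : Fin n => l.getD i false) ∈ avoiding010 n (l.count true) := by
  refine ⟨?_, ?_⟩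
  · rw [← count_true_ofFn, ofFn_getD_of_length_eq false hlen]
  · rintro ⟨i, hi, h0, h1, h2⟩
    have getElem?_eq (j : ℕ) (hj : j < n) : l[j]? = some (l.getD j false) := by
      simp [List.getElem?_eq_getElem (hlen ▸ hj)]
    exact hl i ⟨by rw [getElem?_eq i (by omega)]; exact congrArg some h0,
      by rw [getElem?_eq (i + 1) (by omega)]; exact congrArg some h1,
      by rw [getElem?_eq (i + 2) hi]; exact congrArg some h2⟩

def blockWord (m r : ℕ) (S : Finset (Fin m)) : List Bool :=
  doubleOnes (List.ofFn fun i => decide (i ∈ S)) ++ List.replicate r true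

lemma length_blockWord (m r : ℕ) (S : Finset (Fin m)) :
    (blockWord m r S).length = m + S.card + r := by
  simp [blockWord, length_doubleOnes, count_true_ofFn]

lemma count_true_blockWord (m r : ℕ) (S : Finset (Fin m)) :
    (blockWord m r S).count true = 2 * S.card + r := by
  simp [blockWord, count_true_doubleOnes, count_true_ofFn]

lemma avoids010_blockWord (m r : ℕ) (S : Finset (Fin m)) : Avoids010 (blockWord m r S) :=
  avoids010_doubleOnes_append_replicate _ r

lemma blockWord_injective (m r : ℕ) : Function.Injective (blockWord m r) := by
  intro S T h
  have := List.ofFn_injective (doubleOnes_injective (List.append_cancel_right h))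
  ext i
  simpa using congrFun this i

end Pattern010

open Pattern010 in
/-- The number of binary sequences of length `n` with exactly `ℓ` ones
(`2 ≤ ℓ ≤ n`) avoiding the consecutive pattern `0,1,0` is at least
`C(n - ⌈ℓ/2⌉, ⌊ℓ/2⌋)`. -/
theorem stmt1 (n ℓ : ℕ) (hn : ℓ ≤ n) :
    Nat.choose (n - (ℓ + 1) / 2) (ℓ / 2) ≤
      {s : Fin n → Bool |
        (Finset.univ.filter (fun i => s i = true)).card = ℓ ∧
        ¬ ∃ i : ℕ, ∃ h : i + 2 < n,
            s ⟨i, by omega⟩ = false ∧ s ⟨i + 1, by omega⟩ = true ∧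
            s ⟨i + 2, h⟩ = false}.ncard := by
  set m := n - (ℓ + 1) / 2
  set k := ℓ / 2
  have length_eq {S : Finset (Fin m)} (hS : S.card = k) : (blockWord m (ℓ % 2) S).length = n := by
    rw [length_blockWord, hS]
    omega
  calc m.choose k
        = ((Finset.univ : Finset (Fin m)).powersetCard k : Set (Finset (Fin m))).ncard := by simp
    _ ≤ (avoiding010 n ℓ).ncard := by
      refine Set.ncard_le_ncard_of_injOn (fun S i => (blockWord m (ℓ % 2) S).getD i false) ?_ ?_
      · intro S hS
        rw [Finset.mem_coe, Finset.mem_powersetCard] at hS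
        have := getD_mem_avoiding010 (avoids010_blockWord m (ℓ % 2) S) (length_eq hS.2)
        rwa [count_true_blockWord, hS.2, show 2 * k + ℓ % 2 = ℓ by omega] at this
      · intro S hS T hT hST
        rw [Finset.mem_coe, Finset.mem_powersetCard] at hS hT
        apply blockWord_injective m (ℓ % 2)
        rw [← ofFn_getD_of_length_eq false (length_eq hS.2),
          ← ofFn_getD_of_length_eq false (length_eq hT.2)]
        exact congrArg List.ofFn hST
end

section
/- Let S be a finite nonempty set of points in the plane and let p be a point not contained in the convex hull of S. Then there exists a vertex q of the convex hull of S (an extreme point of S) such that the open line segment from p to q is disjoint from the convex hull of S. Moreover, if S ∪ {p} is not contained in a single line, there are at least two such vertices q. -/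
abbrev Pt : Type := EuclideanSpace ℝ (Fin 2)

/-!
Separate `p` from `S` by a linear functional `f`, so that `f p < f s` on `S`, and complete it
to coordinates `(f, g)`. Among the points of `S`, take those for which the line from `p` has
maximal slope `(g s - g p) / (f s - f p)`; the one nearest to `p` (smallest `f`) is a vertex,
and the open segment from `p` to it lies on a supporting line of the hull, on the side of `p`.
Minimal slope gives a second such vertex, and if the two coincide then all slopes are equal,
i.e. `S ∪ {p}` lies on one line.
-/

open Set

section Ordered

variable {𝕜 E : Type*} [Field 𝕜] [LinearOrder 𝕜] [IsStrictOrderedRing 𝕜]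
  [AddCommGroup E] [Module 𝕜 E]

variable (𝕜) in
def IsVisibleVertex (S : Set E) (p q : E) : Prop :=
  q ∈ S ∧ q ∉ convexHull 𝕜 (S \ {q}) ∧ openSegment 𝕜 p q ∩ convexHull 𝕜 S = ∅

theorem convexHull_inter_hyperplane_subset {S : Set E} {h : E →ₗ[𝕜] 𝕜} {c : 𝕜}
    (hS : ∀ s ∈ S, h s ≤ c) :
    convexHull 𝕜 S ∩ {x | h x = c} ⊆ convexHull 𝕜 {s ∈ S | h s = c} := by
  -- `{h < c} ∪ convexHull F` is convex since an open segment leaving the hyperplane `h = c`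
  -- lies strictly below it.
  set F := {s ∈ S | h s = c}
  have hF : ∀ y ∈ convexHull 𝕜 F, h y = c := fun y hy =>
    convexHull_min (fun s hs => hs.2) (convex_hyperplane h.isLinear c) hy
  have hconv : Convex 𝕜 ({x | h x < c} ∪ convexHull 𝕜 F) := by
    rw [convex_iff_openSegment_subset]
    intro x hx y hy z ⟨a, b, ha, hb, hab, hz⟩
    by_cases hxy : x ∈ convexHull 𝕜 F ∧ y ∈ convexHull 𝕜 F
    · exact Or.inr <|
        (convex_convexHull 𝕜 F).openSegment_subset hxy.1 hxy.2 ⟨a, b, ha, hb, hab, hz⟩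
    left
    have hx' : h x ≤ c := hx.elim le_of_lt (fun hx => (hF x hx).le)
    have hy' : h y ≤ c := hy.elim le_of_lt (fun hy => (hF y hy).le)
    have hlt : h x < c ∨ h y < c := by
      rcases hx with hx | hx
      · exact Or.inl hx
      rcases hy with hy | hy
      · exact Or.inr hy
      exact absurd ⟨hx, hy⟩ hxy
    calc h z = a * h x + b * h y := by
          rw [← hz, map_add, map_smul, map_smul, smul_eq_mul, smul_eq_mul]
      _ < a * c + b * c := by
        rcases hlt with hlt | hlt
        · exact add_lt_add_of_lt_of_le (by gcongr) (by gcongr)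
        · exact add_lt_add_of_le_of_lt (by gcongr) (by gcongr)
      _ = c := by rw [← add_mul, hab, one_mul]
  rintro x ⟨hx, hxc⟩
  have hsub : S ⊆ {x | h x < c} ∪ convexHull 𝕜 F := fun s hs =>
    (hS s hs).lt_or_eq.imp id fun he => subset_convexHull 𝕜 F ⟨hs, he⟩
  rcases convexHull_min hsub hconv hx with hlt | hmem
  · exact absurd hxc (ne_of_lt hlt)
  · exact hmem

theorem isVisibleVertex_of_lexMin {S : Set E} {h f : E →ₗ[𝕜] 𝕜} {c : 𝕜} {p q : E}
    (hS : ∀ s ∈ S, h s ≤ c) (hq : q ∈ S) (hqc : h q = c)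
    (hmin : ∀ s ∈ S, h s = c → s ≠ q → f q < f s) (hpc : h p = c) (hpq : f p < f q) :
    IsVisibleVertex 𝕜 S p q := by
  refine ⟨hq, fun hq' => ?_, ?_⟩
  · have hface := convexHull_inter_hyperplane_subset (S := S \ {q}) (fun s hs => hS s hs.1)
      ⟨hq', hqc⟩
    have hgt : {s ∈ S \ {q} | h s = c} ⊆ {x | f q < f x} := fun s ⟨⟨hs, hsq⟩, hsc⟩ =>
      hmin s hs hsc hsq
    exact lt_irrefl _ (convexHull_min hgt (convex_halfSpace_gt f.isLinear _) hface)
  · refine eq_empty_iff_forall_notMem.2 fun x ⟨⟨a, b, ha, hb, hab, hx⟩, hxS⟩ => ?_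
    have hlin : ∀ l : E →ₗ[𝕜] 𝕜, l x = a * l p + b * l q := fun l => by
      rw [← hx, map_add, map_smul, map_smul, smul_eq_mul, smul_eq_mul]
    have hxc : h x = c := by rw [hlin, hpc, hqc, ← add_mul, hab, one_mul]
    have hge : {s ∈ S | h s = c} ⊆ {x | f q ≤ f x} := fun s ⟨hs, hsc⟩ => by
      rcases eq_or_ne s q with rfl | hsq
      · exact le_rfl
      · exact (hmin s hs hsc hsq).le
    have hqx : f q ≤ f x := convexHull_min hge (convex_halfSpace_ge f.isLinear _)
      (convexHull_inter_hyperplane_subset hS ⟨hxS, hxc⟩)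
    have hxq : f x < f q := by
      calc f x = a * f p + b * f q := hlin f
        _ < a * f q + b * f q := by gcongr
        _ = f q := by rw [← add_mul, hab, one_mul]
    exact hqx.not_gt hxq

theorem exists_isVisibleVertex_forall_slope_le {S : Set E} {f g : E →ₗ[𝕜] 𝕜} {p : E}
    (hfg : Function.Injective (f.prod g)) (hfin : S.Finite) (hne : S.Nonempty)
    (hsep : ∀ s ∈ S, f p < f s) :
    ∃ q, IsVisibleVertex 𝕜 S p q ∧
      ∀ s ∈ S, (g s - g p) * (f q - f p) ≤ (g q - g p) * (f s - f p) := by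
  have hpos : ∀ s ∈ S, 0 < f s - f p := fun s hs => sub_pos.2 (hsep s hs)
  obtain ⟨q₀, hq₀, hmax⟩ := S.exists_max_image (fun s => (g s - g p) / (f s - f p)) hfin hne
  set M := (g q₀ - g p) / (f q₀ - f p)
  -- the level line `h = h p` is the line through `p` of maximal slope `M`
  set h := g - M • f
  have happ : ∀ x, h x = g x - M * f x := fun _ => rfl
  have hS : ∀ s ∈ S, h s ≤ h p := fun s hs => by
    have := (div_le_iff₀ (hpos s hs)).1 (hmax s hs)
    rw [happ, happ]; linarith
  have hface : {s ∈ S | h s = h p}.Nonempty := ⟨q₀, hq₀, by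
    have : M * (f q₀ - f p) = g q₀ - g p := (eq_div_iff (hpos q₀ hq₀).ne').1 rfl
    rw [happ, happ]; linarith⟩
  obtain ⟨q, ⟨hq, hqc⟩, hqmin⟩ := exists_min_image _ f (hfin.subset (sep_subset S _)) hface
  refine ⟨q, isVisibleVertex_of_lexMin hS hq hqc (fun s hs hsc hsq => ?_) rfl (hsep q hq),
    fun s hs => ?_⟩
  · refine (hqmin s ⟨hs, hsc⟩).lt_of_ne fun hfq => hsq (hfg (Prod.ext hfq.symm ?_))
    have : h s = h q := hsc.trans hqc.symm
    rw [happ, happ, hfq] at this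
    simpa using this
  · have hs' := hS s hs
    rw [happ, happ] at hs' hqc
    calc (g s - g p) * (f q - f p) ≤ M * (f s - f p) * (f q - f p) := by
          gcongr
          · exact (hpos q hq).le
          · linarith
      _ = (g q - g p) * (f s - f p) := by rw [show g q - g p = M * (f q - f p) by linarith]; ring

theorem collinear_union_of_slope_eq {S : Set E} {f g : E →ₗ[𝕜] 𝕜} {p q : E}
    (hfg : Function.Injective (f.prod g)) (hpq : f p ≠ f q)
    (hS : ∀ s ∈ S, (g s - g p) * (f q - f p) = (g q - g p) * (f s - f p)) :
    Collinear 𝕜 (S ∪ {p}) := by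
  rw [collinear_iff_of_mem (mem_union_right S (mem_singleton p))]
  refine ⟨q - p, ?_⟩
  rintro s (hs | rfl)
  · have hpq' : f q - f p ≠ 0 := sub_ne_zero.2 hpq.symm
    refine ⟨(f s - f p) / (f q - f p), hfg (Prod.ext ?_ ?_)⟩ <;>
      simp only [LinearMap.prod_apply, Function.prod] <;>
      simp only [vadd_eq_add, map_add, map_smul, map_sub, smul_eq_mul] <;> field_simp
    · ring
    · linear_combination hS s hs
  · exact ⟨0, by simp⟩

theorem exists_ne_isVisibleVertex {S : Set E} {f g : E →ₗ[𝕜] 𝕜} {p : E}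
    (hfg : Function.Injective (f.prod g)) (hfin : S.Finite) (hne : S.Nonempty)
    (hsep : ∀ s ∈ S, f p < f s) (hS : ¬ Collinear 𝕜 (S ∪ {p})) :
    ∃ q₁ q₂, q₁ ≠ q₂ ∧ IsVisibleVertex 𝕜 S p q₁ ∧ IsVisibleVertex 𝕜 S p q₂ := by
  obtain ⟨q₁, hq₁, hmax⟩ := exists_isVisibleVertex_forall_slope_le hfg hfin hne hsep
  have hfg' : Function.Injective (f.prod (-g)) := fun x y hxy =>
    hfg (by simpa [LinearMap.prod_apply, Function.prod] using hxy)
  obtain ⟨q₂, hq₂, hmin⟩ := exists_isVisibleVertex_forall_slope_le hfg' hfin hne hsep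
  refine ⟨q₁, q₂, fun heq => hS ?_, hq₁, hq₂⟩
  subst heq
  refine collinear_union_of_slope_eq hfg (hsep q₁ hq₁.1).ne fun s hs =>
    le_antisymm (hmax s hs) ?_
  have := hmin s hs
  simp only [LinearMap.neg_apply] at this
  linarith

end Ordered

theorem exists_injective_prod_of_finrank_eq_two {K V : Type*} [Field K] [AddCommGroup V]
    [Module K V] [FiniteDimensional K V] (hV : Module.finrank K V = 2) {f : V →ₗ[K] K}
    (hf : f ≠ 0) : ∃ g : V →ₗ[K] K, Function.Injective (f.prod g) := by
  have hker : Module.finrank K (LinearMap.ker f) = 1 := by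
    have := Module.Dual.finrank_ker_add_one_of_ne_zero hf
    omega
  obtain ⟨v, hv, hspan⟩ := finrank_eq_one_iff'.1 hker
  obtain ⟨g, hg⟩ := Module.Projective.exists_dual_ne_zero K (x := (v : V)) (by simpa using hv)
  refine ⟨g, LinearMap.ker_eq_bot.1 (eq_bot_iff.2 ?_)⟩
  rintro x hx
  rw [LinearMap.ker_prod] at hx
  obtain ⟨c, hc⟩ := hspan ⟨x, hx.1⟩
  have hcx : c • (v : V) = x := congrArg Subtype.val hc
  have hc0 : c = 0 := by
    have : c * g v = 0 := by rw [← smul_eq_mul, ← map_smul, hcx]; exact hx.2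
    exact (mul_eq_zero.1 this).resolve_right hg
  rw [Submodule.mem_bot, ← hcx, hc0, zero_smul]

/-- Every nonempty finite point set `S` and point `p` outside its convex hull
has a visible vertex: an extreme point `q` of `S` such that the open segment
`pq` misses the convex hull of `S`. Moreover, if `S ∪ {p}` is not collinear,
there are at least two such visible vertices. -/
theorem stmt3 (S : Set Pt) (hfin : S.Finite) (hne : S.Nonempty) (p : Pt)
    (hp : p ∉ convexHull ℝ S) :
    (∃ q ∈ S, q ∉ convexHull ℝ (S \ {q}) ∧
        openSegment ℝ p q ∩ convexHull ℝ S = ∅) ∧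
    (¬ Collinear ℝ (S ∪ {p}) →
      ∃ q₁ q₂ : Pt, q₁ ≠ q₂ ∧
        (q₁ ∈ S ∧ q₁ ∉ convexHull ℝ (S \ {q₁}) ∧
          openSegment ℝ p q₁ ∩ convexHull ℝ S = ∅) ∧
        (q₂ ∈ S ∧ q₂ ∉ convexHull ℝ (S \ {q₂}) ∧
          openSegment ℝ p q₂ ∩ convexHull ℝ S = ∅)) := by
  obtain ⟨f, u, hpu, hu⟩ := geometric_hahn_banach_point_closed (convex_convexHull ℝ S)
    (hfin.isCompact_convexHull ℝ).isClosed hp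
  have hsep : ∀ s ∈ S, (f : Pt →ₗ[ℝ] ℝ) p < (f : Pt →ₗ[ℝ] ℝ) s := fun s hs =>
    hpu.trans (hu s (subset_convexHull ℝ S hs))
  have hf : (f : Pt →ₗ[ℝ] ℝ) ≠ 0 := fun h0 => by
    obtain ⟨s, hs⟩ := hne
    exact (hsep s hs).ne (by rw [h0, LinearMap.zero_apply, LinearMap.zero_apply])
  obtain ⟨g, hfg⟩ := exists_injective_prod_of_finrank_eq_two finrank_euclideanSpace_fin hf
  obtain ⟨q, hq, -⟩ := exists_isVisibleVertex_forall_slope_le hfg hfin hne hsep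
  exact ⟨⟨q, hq⟩, exists_ne_isVisibleVertex hfg hfin hne hsep⟩
end

section
/- Let S be a finite set of points in the plane, let p be a vertex of the convex hull of S, and let q be another point of S \ {p} that is a vertex of the convex hull of S \ {p} visible from p (the open segment pq is disjoint from the convex hull of S \ {p}). Then the segment pq does not intersect the convex hull of S \ {p, q} except possibly at q's boundary; in particular, the closed segment pq is disjoint from the convex hull of S \ {p, q} minus the point q. -/
/-! The closed segment `[p, q]` is `{p, q}` together with the open segment: `p` misses the hull
of `S \ {p}` because it is extreme, the open segment misses it by visibility, and `q` is excluded
explicitly. The hull of `S \ {p, q}` is contained in that of `S \ {p}`. -/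

theorem segment_inter_diff_right_eq_empty {𝕜 E : Type*} [Semiring 𝕜] [PartialOrder 𝕜]
    [ZeroLEOneClass 𝕜] [AddCommMonoid E] [Module 𝕜 E] {C : Set E} {p q : E}
    (hp : p ∉ C) (hvis : openSegment 𝕜 p q ∩ C = ∅) :
    segment 𝕜 p q ∩ (C \ {q}) = ∅ := by
  rw [Set.eq_empty_iff_forall_notMem]
  rintro x ⟨hseg, hxC, hxq⟩
  rw [← insert_endpoints_openSegment] at hseg
  rcases hseg with rfl | rfl | hopen
  · exact hp hxC
  · exact hxq rfl
  · exact hvis.subset ⟨hopen, hxC⟩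

theorem stmt4_general (S : Set Pt) (p q : Pt)
    (hpext : p ∉ convexHull ℝ (S \ {p}))
    (hvis : openSegment ℝ p q ∩ convexHull ℝ (S \ {p}) = ∅) :
    segment ℝ p q ∩ (convexHull ℝ (S \ {p, q}) \ {q}) = ∅ := by
  have hsub : convexHull ℝ (S \ {p, q}) ⊆ convexHull ℝ (S \ {p}) :=
    convexHull_mono <|
      Set.sdiff_subset_sdiff_right (Set.singleton_subset_iff.2 (Set.mem_insert p {q}))
  exact Set.subset_eq_empty
    (Set.inter_subset_inter_right _ (Set.sdiff_subset_sdiff_left hsub))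
    (segment_inter_diff_right_eq_empty hpext hvis)

/-- If `p` is an extreme point of a finite set `S`, and `q` is an extreme point
of `S \ {p}` visible from `p` (the open segment `pq` misses the convex hull of
`S \ {p}`), then the closed segment `pq` is disjoint from the convex hull of
`S \ {p, q}` minus the point `q`. -/
theorem stmt4 (S : Set Pt) (hfin : S.Finite) (p q : Pt)
    (hp : p ∈ S) (hq : q ∈ S) (hpq : p ≠ q)
    (hpext : p ∉ convexHull ℝ (S \ {p}))
    (hqext : q ∉ convexHull ℝ ((S \ {p}) \ {q}))
    (hvis : openSegment ℝ p q ∩ convexHull ℝ (S \ {p}) = ∅) :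
    segment ℝ p q ∩ (convexHull ℝ (S \ {p, q}) \ {q}) = ∅ :=
  stmt4_general S p q hpext hvis
end

section
/- For n ≥ 3, the sum over all triples (a,b,c) of non-negative integers with a+b+c = n−3 of (a+1)·C(a+b, a)·C(b+c, b) equals the coefficient of x^(n−3) in the power series expansion of (1−2x)/(1−3x+x²)². -/
/-!
Summing over `a` and `c` for fixed `b` uses `∑_c C(b + c, b) x^c = 1 / (1 - x)^(b + 1)` and
`∑_a (a + 1) C(a + b, a) x^a = (1 + b x) / (1 - x)^(b + 2)`, so the triple sum is the coefficient
of `x^m`, `m = n - 3`, in `∑_{b ≤ m} x^b (1 + b x) / (1 - x)^(2b + 3)`, a geometric-type series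
in `x / (1 - x)^2`. Its partial sums satisfy
`(1 - 3x + x²)² T_N = 1 - 2x - x^N ((1 - x)(1 - 2x) + N x (1 - 3x + x²)) / (1 - x)^(2N + 1)`,
by induction on `N`, and the error term does not reach the coefficient of `x^m` once `N = m + 1`.
-/

open PowerSeries Finset

theorem Finset.Nat.sum_antidiagonalTuple_three {M : Type*} [AddCommMonoid M]
    (f : ℕ → ℕ → ℕ → M) (m : ℕ) :
    ∑ t ∈ Nat.antidiagonalTuple 3 m, f (t 0) (t 1) (t 2)
      = ∑ b ∈ range (m + 1), ∑ p ∈ antidiagonal (m - b), f p.1 b p.2 := by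
  rw [sum_sigma']
  refine sum_nbij' (fun t => ⟨t 1, (t 0, t 2)⟩) (fun q => ![q.2.1, q.1, q.2.2])
    ?_ ?_ ?_ ?_ ?_
  · intro t ht
    rw [Nat.mem_antidiagonalTuple, Fin.sum_univ_three] at ht
    simp only [mem_sigma, mem_range, HasAntidiagonal.mem_antidiagonal]
    omega
  · intro q hq
    simp only [mem_sigma, mem_range, HasAntidiagonal.mem_antidiagonal] at hq
    rw [Nat.mem_antidiagonalTuple, Fin.sum_univ_three]
    simp only [Matrix.cons_val_zero, Matrix.cons_val_one, Matrix.cons_val_two, Matrix.tail_cons,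
      Matrix.head_cons]
    omega
  · intro t _
    funext i
    fin_cases i <;> rfl
  · intro q _
    rfl
  · intro t _
    rfl

namespace PowerSeries

variable {R : Type*} [CommRing R]

theorem coeff_sum_range_X_pow_mul (F G : ℕ → R⟦X⟧) (m : ℕ) :
    coeff m (∑ b ∈ range (m + 1), X ^ b * (F b * G b))
      = ∑ t ∈ Finset.Nat.antidiagonalTuple 3 m,
          coeff (t 0) (F (t 1)) * coeff (t 2) (G (t 1)) := by
  rw [Finset.Nat.sum_antidiagonalTuple_three (fun a b c => coeff a (F b) * coeff c (G b)),
    map_sum]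
  refine sum_congr rfl fun b hb => ?_
  rw [coeff_X_pow_mul', if_pos (by simpa [Nat.lt_succ_iff] using hb), coeff_mul]

theorem coeff_invOneSubPow_succ (b c : ℕ) :
    coeff c (invOneSubPow R (b + 1) : R⟦X⟧) = ((b + c).choose b : R) := by
  rw [invOneSubPow_val_succ_eq_mk_add_choose, coeff_mk]

theorem coeff_one_add_mul_X_mul_invOneSubPow (a b : ℕ) :
    coeff a ((1 + (b : R⟦X⟧) * X) * (invOneSubPow R (b + 2) : R⟦X⟧))
      = (((a + 1) * (a + b).choose a : ℕ) : R) := by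
  -- `1 + b X = (b + 1) - b (1 - X)`
  have hsplit : (1 + (b : R⟦X⟧) * X) * (invOneSubPow R (b + 2) : R⟦X⟧)
      = C ((b : R) + 1) * (invOneSubPow R (b + 2) : R⟦X⟧)
        - C (b : R) * (invOneSubPow R (b + 1) : R⟦X⟧) := by
    rw [← one_sub_pow_mul_invOneSubPow_val_add_eq_invOneSubPow_val R (b + 1) 1, map_add,
      map_natCast, map_one]
    ring
  have hsymm : (a + b).choose a = (b + a).choose b := by rw [Nat.choose_symm_add, add_comm]
  have hpascal := congrArg (Nat.cast : ℕ → R) (Nat.add_one_mul_choose_eq (b + a) b)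
  rw [add_right_comm] at hpascal
  rw [hsplit, map_sub, coeff_C_mul, coeff_C_mul, coeff_invOneSubPow_succ, coeff_invOneSubPow_succ,
    hsymm]
  push_cast at hpascal ⊢
  linear_combination -hpascal

theorem sq_mul_sum_range_X_pow_mul_invOneSubPow (N : ℕ) :
    (1 - 3 * X + X ^ 2 : R⟦X⟧) ^ 2 * ∑ b ∈ range N, X ^ b * ((1 + (b : R⟦X⟧) * X)
        * (invOneSubPow R (b + 2) : R⟦X⟧) * (invOneSubPow R (b + 1) : R⟦X⟧))
      = 1 - 2 * X - X ^ N * ((invOneSubPow R (2 * N + 1) : R⟦X⟧)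
          * ((1 - X) * (1 - 2 * X) + (N : R⟦X⟧) * X * (1 - 3 * X + X ^ 2))) := by
  induction N with
  | zero =>
    have h := one_sub_pow_mul_invOneSubPow_val_add_eq_invOneSubPow_val R 0 1
    rw [invOneSubPow_zero, Units.val_one] at h
    rw [sum_range_zero, mul_zero, Nat.cast_zero]
    linear_combination (1 - 2 * X) * h
  | succ N ih =>
    have hprod : (invOneSubPow R (N + 2) : R⟦X⟧) * invOneSubPow R (N + 1)
        = invOneSubPow R (2 * (N + 1) + 1) := by
      rw [← Units.val_mul, ← invOneSubPow_add]
      ring_nf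
    have hshift : (invOneSubPow R (2 * N + 1) : R⟦X⟧)
        = (1 - X : R⟦X⟧) ^ 2 * (invOneSubPow R (2 * (N + 1) + 1) : R⟦X⟧) :=
      (one_sub_pow_mul_invOneSubPow_val_add_eq_invOneSubPow_val R (2 * N + 1) 2).symm
    rw [sum_range_succ, mul_add, ih, mul_assoc _ _ (invOneSubPow R (N + 1) : R⟦X⟧), hprod,
      hshift]
    push_cast
    ring

theorem coeff_eq_coeff_mul_inv_of_mul_eq_sub_X_pow_mul {k : Type*} [Field k] {Q T A W : k⟦X⟧}
    {m : ℕ} (hQ : constantCoeff Q ≠ 0) (h : Q * T = A - X ^ (m + 1) * W) :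
    coeff m T = coeff m (A * Q⁻¹) := by
  have hinv : Q * Q⁻¹ = 1 := PowerSeries.mul_inv_cancel Q hQ
  have hT : T = A * Q⁻¹ - X ^ (m + 1) * (W * Q⁻¹) := by
    linear_combination Q⁻¹ * h - T * hinv
  rw [hT, map_sub, coeff_X_pow_mul', if_neg (by omega), sub_zero]

end PowerSeries

theorem stmt9_general (n : ℕ) :
    ((∑ t ∈ Finset.Nat.antidiagonalTuple 3 (n - 3),
        (t 0 + 1) * Nat.choose (t 0 + t 1) (t 0) * Nat.choose (t 1 + t 2) (t 1) : ℕ) : ℚ)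
      = PowerSeries.coeff (R := ℚ) (n - 3)
          ((1 - 2 * (PowerSeries.X : PowerSeries ℚ)) *
            ((1 - 3 * PowerSeries.X + PowerSeries.X ^ 2) ^ 2)⁻¹) := by
  set m := n - 3
  rw [Nat.cast_sum]
  calc _ = ∑ t ∈ Finset.Nat.antidiagonalTuple 3 m,
        coeff (t 0) ((1 + (t 1 : ℚ⟦X⟧) * X) * (invOneSubPow ℚ (t 1 + 2) : ℚ⟦X⟧))
          * coeff (t 2) (invOneSubPow ℚ (t 1 + 1) : ℚ⟦X⟧) := by
        refine sum_congr rfl fun t _ => ?_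
        rw [coeff_one_add_mul_X_mul_invOneSubPow, coeff_invOneSubPow_succ]
        push_cast
        ring
    _ = coeff m (∑ b ∈ range (m + 1), X ^ b * ((1 + (b : ℚ⟦X⟧) * X)
          * (invOneSubPow ℚ (b + 2) : ℚ⟦X⟧) * (invOneSubPow ℚ (b + 1) : ℚ⟦X⟧))) :=
        (coeff_sum_range_X_pow_mul
          (fun b => (1 + (b : ℚ⟦X⟧) * X) * (invOneSubPow ℚ (b + 2) : ℚ⟦X⟧))
          (fun b => (invOneSubPow ℚ (b + 1) : ℚ⟦X⟧)) m).symm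
    _ = _ := coeff_eq_coeff_mul_inv_of_mul_eq_sub_X_pow_mul (by simp)
          (sq_mul_sum_range_X_pow_mul_invOneSubPow (m + 1))

/-- For `n ≥ 3`, the sum over all triples `(a,b,c)` of non-negative integers
with `a+b+c = n-3` of `(a+1)·C(a+b,a)·C(b+c,b)` equals the coefficient of
`x^(n-3)` in `(1-2x)/(1-3x+x²)²`. -/
theorem stmt9 (n : ℕ) (hn : 3 ≤ n) :
    ((∑ t ∈ Finset.Nat.antidiagonalTuple 3 (n - 3),
        (t 0 + 1) * Nat.choose (t 0 + t 1) (t 0) * Nat.choose (t 1 + t 2) (t 1) : ℕ) : ℚ)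
      = PowerSeries.coeff (R := ℚ) (n - 3)
          ((1 - 2 * (PowerSeries.X : PowerSeries ℚ)) *
            ((1 - 3 * PowerSeries.X + PowerSeries.X ^ 2) ^ 2)⁻¹) :=
  stmt9_general n
end

section
/- Let S be a finite planar point set with n points, of which ℓ ≥ 2 lie on a line L and the remaining n − ℓ points all lie strictly on one side of L. Then the number of non-crossing Hamiltonian paths of S is at least C(n − ⌈ℓ/2⌉, ⌊ℓ/2⌋). -/
/-- The consecutive segments of the polygonal path through the points of `l`
are pairwise disjoint, except that consecutive segments share exactly their
common endpoint. -/
def NoncrossingList (l : List Pt) : Prop :=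
  (∀ i : ℕ, ∀ h : i + 2 < l.length,
      segment ℝ (l.get ⟨i, by omega⟩) (l.get ⟨i + 1, by omega⟩) ∩
        segment ℝ (l.get ⟨i + 1, by omega⟩) (l.get ⟨i + 2, h⟩) =
      {l.get ⟨i + 1, by omega⟩}) ∧
  (∀ i j : ℕ, ∀ hij : i + 1 < j, ∀ h : j + 1 < l.length,
      segment ℝ (l.get ⟨i, by omega⟩) (l.get ⟨i + 1, by omega⟩) ∩
        segment ℝ (l.get ⟨j, by omega⟩) (l.get ⟨j + 1, h⟩) = ∅)

/-- `l` is (an orientation of) a non-crossing Hamiltonian path of `S`. -/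
def IsNCHamList (S : Finset Pt) (l : List Pt) : Prop :=
  l.Nodup ∧ (∀ x : Pt, x ∈ l ↔ x ∈ S) ∧ NoncrossingList l

/-- The number of non-crossing Hamiltonian paths of `S`: a path is identified
with the (unordered) pair consisting of an ordering of its vertices and its
reversal. -/
noncomputable def hamCount (S : Finset Pt) : ℕ :=
  {P : Set (List Pt) | ∃ l : List Pt, IsNCHamList S l ∧ P = {l, l.reverse}}.ncard

/-- `l` is (an orientation of) a non-crossing path with vertices in `S`:
its points are distinct points of `S`, consecutive segments are pairwise
non-crossing, and no segment passes through a point of `S` other than its two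
endpoints. -/
def IsNCPathList (S : Finset Pt) (l : List Pt) : Prop :=
  l.Nodup ∧ (∀ x ∈ l, x ∈ S) ∧ NoncrossingList l ∧
  ∀ i : ℕ, ∀ h : i + 1 < l.length, ∀ p ∈ S,
    p ∈ segment ℝ (l.get ⟨i, by omega⟩) (l.get ⟨i + 1, h⟩) →
      p = l.get ⟨i, by omega⟩ ∨ p = l.get ⟨i + 1, h⟩

/-- The number of non-crossing paths with vertices in `S` (including the empty
path and one-vertex paths); a path is identified with its reversal. -/
noncomputable def pathCount (S : Finset Pt) : ℕ :=
  {P : Set (List Pt) | ∃ l : List Pt, IsNCPathList S l ∧ P = {l, l.reverse}}.ncard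

/-- `S` is in convex position: every point of `S` is an extreme point. -/
def ConvexPos (S : Finset Pt) : Prop :=
  ∀ p ∈ S, p ∉ convexHull ℝ ((↑S : Set Pt) \ {p})


/-!
Sort the points of `S` on the line `L` as `q₁ < q₂ < ⋯ < q_ℓ` and pair them up as `q₁q₂`,
`q₃q₄`, …. A word of `⌊ℓ/2⌋ + 1` letters summing to `m = n - ℓ` (there are
`C(m + ⌊ℓ/2⌋, ⌊ℓ/2⌋)` of them, and `m + ⌊ℓ/2⌋ = n - ⌈ℓ/2⌉`) cuts the points above `L` into
groups: for `k ≤ ⌊ℓ/2⌋` the `k`-th group consists of the next `w_k` points in the angular order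
around `q_{2k-1}`, and the path visits it in that order, dives into `q_{2k-1}` and walks along
`L` to `q_{2k}`. The remaining points form the last group, a fan around `q_ℓ` if `ℓ` is even,
a group diving into `q_ℓ` if `ℓ` is odd.

Built back to front, every new edge `[v, x]` meets the rest of the path only in `x`: the rest
lies in a convex region (a half-plane bounded by a line through the current apex, together with
part of that line) which `[v, x]` touches only at `x`. The word is read off the path from the
positions of the line points, and `q₁` always comes right before `q₂`, so distinct words give
distinct paths and no path is the reversal of another.
-/

open Set

theorem Module.Dual.exists_ker_inf_ker_eq_bot {K E : Type*} [Field K] [AddCommGroup E]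
    [Module K E] [FiniteDimensional K E] (hE : Module.finrank K E = 2) {φ : Module.Dual K E}
    (hφ : φ ≠ 0) : ∃ ψ : Module.Dual K E, LinearMap.ker φ ⊓ LinearMap.ker ψ = ⊥ := by
  have hker : Module.finrank K (LinearMap.ker φ) = 1 := by
    have := Module.Dual.finrank_ker_add_one_of_ne_zero hφ
    omega
  obtain ⟨v, hv, hspan⟩ := finrank_eq_one_iff'.mp hker
  obtain ⟨ψ, hψ⟩ : ∃ ψ : Module.Dual K E, ψ v ≠ 0 := by
    by_contra! h
    exact hv (Subtype.ext ((Module.forall_dual_apply_eq_zero_iff K (v : E)).mp h))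
  refine ⟨ψ, eq_bot_iff.mpr fun d ⟨hd, hψd⟩ => ?_⟩
  obtain ⟨c, hc⟩ := hspan ⟨d, hd⟩
  have hd : d = c • (v : E) := (congrArg Subtype.val hc).symm
  rw [SetLike.mem_coe, LinearMap.mem_ker, hd, map_smul, smul_eq_mul, mul_eq_zero] at hψd
  rw [Submodule.mem_bot, hd, hψd.resolve_right hψ, zero_smul]

theorem exists_complementary_affineMap {E : Type*} [AddCommGroup E] [Module ℝ E]
    [FiniteDimensional ℝ E] (hE : Module.finrank ℝ E = 2) (f : E →ᵃ[ℝ] ℝ) (hf : f.linear ≠ 0) :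
    ∃ g : E →ᵃ[ℝ] ℝ, ∀ p q, f p = f q → g p = g q → p = q := by
  obtain ⟨ψ, hψ⟩ := Module.Dual.exists_ker_inf_ker_eq_bot hE hf
  refine ⟨ψ.toAffineMap, fun p q hfpq hgpq => sub_eq_zero.mp ?_⟩
  rw [← Submodule.mem_bot ℝ, ← hψ]
  refine ⟨?_, ?_⟩
  · simpa [hfpq] using f.linearMap_vsub p q
  · simpa [sub_eq_zero] using hgpq

section Intervals

variable {α : Type*} [LinearOrder α] {a b c : α}

theorem Set.Ici_inter_uIcc_subset (h : c ≤ a) : Ici a ∩ uIcc c a ⊆ {a} := by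
  rintro t ⟨ht, htu⟩
  rw [uIcc_of_le h] at htu
  exact le_antisymm htu.2 ht

theorem Set.Iic_inter_uIcc_subset (h : a ≤ c) : Iic a ∩ uIcc c a ⊆ {a} := by
  rintro t ⟨ht, htu⟩
  rw [uIcc_of_ge h] at htu
  exact le_antisymm ht htu.1

theorem Set.Ioi_inter_uIcc_subset (hc : c ≤ b) (ha : a ≤ b) : Ioi b ∩ uIcc c a ⊆ {a} := by
  rintro t ⟨ht, htu⟩
  exact absurd (htu.2.trans (sup_le hc ha)) (not_le.mpr ht)

end Intervals

section AffineFunctional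

variable {E : Type*} [AddCommGroup E] [Module ℝ E] (A G : E →ᵃ[ℝ] ℝ) {v x z : E}

theorem AffineMap.apply_mem_uIcc_of_mem_segment (hz : z ∈ segment ℝ v x) :
    A z ∈ uIcc (A v) (A x) := by
  rw [← segment_eq_uIcc, ← image_segment]
  exact mem_image_of_mem A hz

theorem AffineMap.eq_of_mem_segment_of_apply_eq (hz : z ∈ segment ℝ v x) (hzx : A z = A x)
    (hvx : A v ≠ A x) : z = x := by
  rw [segment_eq_image_lineMap] at hz
  obtain ⟨t, -, rfl⟩ := hz
  rw [AffineMap.apply_lineMap, AffineMap.lineMap_apply_ring'] at hzx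
  have ht : t = 1 := by
    have : (t - 1) * (A x - A v) = 0 := by linear_combination hzx
    rcases mul_eq_zero.mp this with h | h
    · linarith
    · exact absurd (sub_eq_zero.mp h).symm hvx
  simp [ht]

def lexHalfSpace (I : Set ℝ) : Set E := {z | A z < 0 ∨ A z = 0 ∧ G z ∈ I}

theorem convex_lexHalfSpace {I : Set ℝ} (hI : Convex ℝ I) : Convex ℝ (lexHalfSpace A G I) := by
  intro z₁ hz₁ z₂ hz₂ a b ha hb hab
  rcases ha.eq_or_lt with rfl | ha
  · simpa [show b = 1 by linarith] using hz₂
  rcases hb.eq_or_lt with rfl | hb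
  · simpa [show a = 1 by linarith] using hz₁
  have hA : A (a • z₁ + b • z₂) = a * A z₁ + b * A z₂ := Convex.combo_affine_apply hab
  have hG : G (a • z₁ + b • z₂) = a * G z₁ + b * G z₂ := Convex.combo_affine_apply hab
  simp only [lexHalfSpace, mem_ofPred_eq, hA, hG] at hz₁ hz₂ ⊢
  rcases hz₁ with h₁ | ⟨h₁, hI₁⟩ <;> rcases hz₂ with h₂ | ⟨h₂, hI₂⟩
  · left; nlinarith
  · left; nlinarith
  · left; nlinarith
  · exact Or.inr ⟨by rw [h₁, h₂]; ring, hI hI₁ hI₂ ha.le hb.le hab⟩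

theorem lexHalfSpace_mono {I J : Set ℝ} (h : I ⊆ J) : lexHalfSpace A G I ⊆ lexHalfSpace A G J :=
  fun _ hz => hz.imp_right fun hz => ⟨hz.1, h hz.2⟩

theorem segment_inter_lexHalfSpace_subset_of_pos {I : Set ℝ} (hv : 0 < A v) (hx : A x = 0) :
    segment ℝ v x ∩ lexHalfSpace A G I ⊆ {x} := by
  rintro z ⟨hz, hzK⟩
  have h := A.apply_mem_uIcc_of_mem_segment hz
  rw [hx, uIcc_of_ge hv.le] at h
  have hAz : A z ≤ 0 := hzK.elim le_of_lt fun h => h.1.le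
  exact A.eq_of_mem_segment_of_apply_eq hz (by rw [hx]; exact le_antisymm hAz h.1)
    (by rw [hx]; exact hv.ne')

theorem segment_inter_lexHalfSpace_subset {I : Set ℝ} (hv : A v = 0) (hx : A x = 0)
    (hG : InjOn G {z | A z = 0}) (hI : I ∩ uIcc (G v) (G x) ⊆ {G x}) :
    segment ℝ v x ∩ lexHalfSpace A G I ⊆ {x} := by
  rintro z ⟨hz, hzK⟩
  have hAz : A z = 0 := by
    simpa [hv, hx] using A.apply_mem_uIcc_of_mem_segment hz
  have hGz : G z ∈ I := hzK.elim (fun h => absurd hAz h.ne) And.right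
  exact hG hAz hx (hI ⟨hGz, G.apply_mem_uIcc_of_mem_segment hz⟩)

end AffineFunctional

namespace NoncrossingList

theorem of_length_le_two {l : List Pt} (h : l.length ≤ 2) : NoncrossingList l :=
  ⟨fun i hi => by omega, fun i j hij hj => by omega⟩

def EdgeAvoids (v x a b : Pt) : Prop := segment ℝ v x ∩ segment ℝ a b ⊆ {x}

theorem cons {v x : Pt} {l : List Pt} (hl : NoncrossingList (x :: l)) (hx : x ∉ l)
    (havoid : (x :: l).IsChain (EdgeAvoids v x)) : NoncrossingList (v :: x :: l) := by
  obtain ⟨hadj, hdisj⟩ := hl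
  rw [List.isChain_iff_getElem] at havoid
  have hx_off : ∀ j (hj : j + 2 < (x :: l).length),
      x ∉ segment ℝ (x :: l)[j + 1] (x :: l)[j + 2] := by
    intro j hj hmem
    rcases j with _ | j
    · have h := (hadj 0 hj).subset ⟨left_mem_segment ℝ _ _, hmem⟩
      have hxl : x = l[0]'(by simp only [List.length_cons] at hj; omega) := by simpa using h
      exact hx (hxl ▸ List.getElem_mem _)
    · exact (hdisj 0 (j + 2) (by omega) hj).subset ⟨left_mem_segment ℝ _ _, hmem⟩
  constructor
  · rintro (_ | i) hi
    · refine (havoid 0 (by simp only [List.length_cons] at hi ⊢; omega)).antisymm ?_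
      rintro _ rfl
      exact ⟨right_mem_segment ℝ _ _, left_mem_segment ℝ _ _⟩
    · exact hadj i (by simp only [List.length_cons] at hi ⊢; omega)
  · rintro (_ | i) (_ | j) hij hj
    · omega
    · refine Set.eq_empty_of_forall_notMem fun z hz => ?_
      have hzx := havoid j (by simp only [List.length_cons] at hj ⊢; omega) hz
      rw [Set.mem_singleton_iff.mp hzx] at hz
      obtain ⟨k, rfl⟩ : ∃ k, j = k + 1 := ⟨j - 1, by omega⟩
      exact hx_off k (by simp only [List.length_cons] at hj ⊢; omega) hz.2
    · omega
    · exact hdisj i j (by omega) (by simp only [List.length_cons] at hj ⊢; omega)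

theorem isChain_edgeAvoids {v x : Pt} {K : Set Pt} (hK : Convex ℝ K)
    (hvx : segment ℝ v x ∩ K ⊆ {x}) {l : List Pt} (hl : ∀ p ∈ l, p ∈ K) :
    l.IsChain (EdgeAvoids v x) :=
  (List.pairwise_of_forall_mem_list fun _ ha _ hb =>
    (Set.inter_subset_inter_right _ (hK.segment_subset (hl _ ha) (hl _ hb))).trans hvx).isChain

theorem isChain_edgeAvoids_append {v x : Pt} {K₁ K₂ : Set Pt} (hK₁ : Convex ℝ K₁)
    (hK₂ : Convex ℝ K₂) (hvx₁ : segment ℝ v x ∩ K₁ ⊆ {x}) (hvx₂ : segment ℝ v x ∩ K₂ ⊆ {x})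
    {u l : List Pt} (hu : ∀ p ∈ u, p ∈ K₁) (hl : ∀ p ∈ l, p ∈ K₂)
    (hhead : ∀ p ∈ l.head?, p ∈ K₁) : (u ++ l).IsChain (EdgeAvoids v x) :=
  (isChain_edgeAvoids hK₁ hvx₁ hu).append (isChain_edgeAvoids hK₂ hvx₂ hl) fun _ ha _ hb =>
    (Set.inter_subset_inter_right _
      (hK₁.segment_subset (hu _ (List.mem_of_mem_getLast? ha)) (hhead _ hb))).trans hvx₁

theorem cons_of_convex {v x : Pt} {l : List Pt} (hl : NoncrossingList (x :: l)) (hx : x ∉ l)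
    {K : Set Pt} (hK : Convex ℝ K) (hvx : segment ℝ v x ∩ K ⊆ {x}) (hlK : ∀ p ∈ x :: l, p ∈ K) :
    NoncrossingList (v :: x :: l) :=
  hl.cons hx (isChain_edgeAvoids hK hvx hlK)

end NoncrossingList

section SortBy

variable {α β : Type*} [LinearOrder β] (key : α → β)

def List.sortBy (l : List α) : List α := l.mergeSort fun a b => decide (key a ≤ key b)

theorem List.sortBy_perm (l : List α) : (l.sortBy key).Perm l := List.mergeSort_perm _ _

theorem List.pairwise_sortBy {l : List α} (hl : l.Nodup) (hkey : InjOn key {a | a ∈ l}) :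
    (l.sortBy key).Pairwise (key · < key ·) := by
  have hperm := l.sortBy_perm key
  refine ((List.pairwise_mergeSort (fun a b c hab hbc => ?_) (fun a b => ?_) l).and
    (hperm.nodup_iff.mpr hl)).imp_of_mem fun ha hb ⟨hle, hne⟩ => ?_
  · simp only [decide_eq_true_eq] at *
    exact hab.trans hbc
  · simpa using le_total (key a) (key b)
  · refine lt_of_le_of_ne (by simpa using hle) fun h => hne ?_
    exact hkey (hperm.mem_iff.mp ha) (hperm.mem_iff.mp hb) h

end SortBy

theorem List.idxOf_eq_succ_of_infix {α : Type*} [DecidableEq α] {l : List α} (hl : l.Nodup)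
    {x y : α} (hxy : x ≠ y) (h : [x, y] <:+: l) : l.idxOf y = l.idxOf x + 1 := by
  obtain ⟨s, t, rfl⟩ := h
  have hs : x ∉ s ∧ y ∉ s := by
    simp only [List.append_assoc, List.cons_append, List.nil_append] at hl
    exact ⟨fun hx => List.disjoint_of_nodup_append hl hx (by simp),
      fun hy => List.disjoint_of_nodup_append hl hy (by simp)⟩
  simp [List.append_assoc, List.idxOf_append_of_notMem hs.1, List.idxOf_append_of_notMem hs.2,
    List.idxOf_cons_ne _ hxy]

theorem List.Nodup.not_isInfix_swap {α : Type*} {l : List α} (hl : l.Nodup) {x y : α}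
    (hxy : x ≠ y) (h : [x, y] <:+: l) : ¬[y, x] <:+: l := by
  classical
  intro h'
  have := List.idxOf_eq_succ_of_infix hl hxy h
  have := List.idxOf_eq_succ_of_infix hl hxy.symm h'
  omega

theorem card_le_hamCount {ι : Type*} [Fintype ι] {S : Finset Pt} (F : ι → List Pt)
    (hF : ∀ i, IsNCHamList S (F i)) (hinj : Function.Injective F)
    (hrev : ∀ i j, F i ≠ (F j).reverse) : Fintype.card ι ≤ hamCount S := by
  have hfin : {P : Set (List Pt) | ∃ l, IsNCHamList S l ∧ P = {l, l.reverse}}.Finite := by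
    refine ((List.finite_toSet S.toList.permutations).image fun l => {l, l.reverse}).subset ?_
    rintro _ ⟨l, ⟨hnd, hmem, -⟩, rfl⟩
    exact ⟨l, List.mem_permutations.mpr ((List.perm_ext_iff_of_nodup hnd S.nodup_toList).mpr
      fun x => by simp [hmem]), rfl⟩
  rw [← Nat.card_eq_fintype_card, ← Set.ncard_univ]
  refine Set.ncard_le_ncard_of_injOn (fun i => ({F i, (F i).reverse} : Set (List Pt)))
    (fun i _ => ⟨F i, hF i, rfl⟩) (fun i _ j _ hij => ?_) hfin
  have hij : ({F i, (F i).reverse} : Set (List Pt)) = {F j, (F j).reverse} := hij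
  rcases hij ▸ Set.mem_insert (F i) {(F i).reverse} with h | h
  · exact hinj h
  · exact absurd h (hrev i j)

def Sym.counts {k m : ℕ} (σ : Sym (Fin (k + 1)) m) : List ℕ :=
  List.ofFn fun i => (σ : Multiset (Fin (k + 1))).count i

theorem Sym.length_counts {k m : ℕ} (σ : Sym (Fin (k + 1)) m) : σ.counts.length = k + 1 := by
  simp [Sym.counts]

theorem Sym.sum_counts {k m : ℕ} (σ : Sym (Fin (k + 1)) m) : σ.counts.sum = m := by
  rw [Sym.counts, List.sum_ofFn, Multiset.sum_count_eq_card fun a _ => Finset.mem_univ a]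
  exact σ.2

theorem Sym.counts_injective {k m : ℕ} : Function.Injective (@Sym.counts k m) :=
  fun _ _ h => Sym.coe_injective (Multiset.ext.mpr (congrFun (List.ofFn_inj.mp h)))

namespace LinePaths

variable (f g : Pt →ᵃ[ℝ] ℝ)

/-- The cotangent of the angle between the line `{f = 0}` and `b - q`, in the coordinates
`(g, f)`: it increases as the direction of `b` seen from `q` turns from `-g` towards `+g`. -/
noncomputable def cot (q b : Pt) : ℝ := (g b - g q) / f b

/-- The determinant of `(b - q, p - q)` in the coordinates `(g, f)`, as an affine function
of `p`. -/
noncomputable def orient (q b : Pt) : Pt →ᵃ[ℝ] ℝ :=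
  (g b - g q) • f - f b • (g - AffineMap.const ℝ Pt (g q))

noncomputable def fanKey (q b : Pt) : ℝ ×ₗ ℝ := toLex (cot f g q b, f b)

noncomputable def diveKey (q b : Pt) : ℝ ×ₗ ℝ := toLex (cot f g q b, -f b)

def SweptAfter (q : Pt) (γ : List Pt) (p : Pt) : Prop :=
  (f p = 0 ∧ g q < g p) ∨ (0 < f p ∧ ∀ b ∈ γ, fanKey f g q b < fanKey f g q p)

structure IsDiveGroup (q : Pt) (γ : List Pt) : Prop where
  pos : ∀ b ∈ γ, 0 < f b
  sorted : γ.Pairwise (diveKey f g q · < diveKey f g q ·)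

/-- The path encoded by the word `w`, for the line points `QL` (sorted along the line) and the
points `B` above it; `o` is the previous line point. Before each pair `q₁ q₂` of consecutive
line points it takes the next `w.head` points of `B` in the angular order around `q₁`, visits
them in that order (farther points first on a common ray), dives into `q₁` and walks along the
line to `q₂`. The remaining points of `B` form the last group: a fan around the last line point,
or a group diving into the unpaired line point `q`. -/
noncomputable def run : Pt → List Pt → List Pt → List ℕ → List Pt
  | o, [], B, _ => B.sortBy (fanKey f g o)
  | _, [q], B, _ => B.sortBy (diveKey f g q) ++ [q]
  | _, q₁ :: q₂ :: Q, B, w =>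
      ((B.sortBy (fanKey f g q₁)).take (w.headD 0)).sortBy (diveKey f g q₁) ++
        q₁ :: q₂ :: run q₂ Q ((B.sortBy (fanKey f g q₁)).drop (w.headD 0)) w.tail

theorem run_perm : ∀ (o : Pt) (QL B : List Pt) (w : List ℕ), (run f g o QL B w).Perm (QL ++ B)
  | o, [], B, w => by simpa [run] using B.sortBy_perm _
  | o, [q], B, w =>
    ((B.sortBy_perm (diveKey f g q)).append_right [q]).trans List.perm_append_comm
  | o, q₁ :: q₂ :: Q, B, w => by
    rw [run]
    have hB := B.sortBy_perm (fanKey f g q₁)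
    generalize B.sortBy (fanKey f g q₁) = s at hB ⊢
    refine List.perm_iff_count.mpr fun a => ?_
    have hrec := (run_perm q₂ Q (s.drop (w.headD 0)) w.tail).count_eq a
    have hγ := ((s.take (w.headD 0)).sortBy_perm (diveKey f g q₁)).count_eq a
    have hs := congrArg (List.count a) (s.take_append_drop (w.headD 0))
    have hB := hB.count_eq a
    simp only [List.count_append, List.count_cons] at hrec hγ hs hB ⊢
    omega

/-- The word is read off the path: its first letter is the position of the first line point. -/
theorem run_injective : ∀ (o : Pt) (QL B : List Pt) (w w' : List ℕ), (∀ q ∈ QL, q ∉ B) →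
    w.length = QL.length / 2 + 1 → w'.length = QL.length / 2 + 1 →
    w.sum = B.length → w'.sum = B.length → run f g o QL B w = run f g o QL B w' → w = w'
  | o, [], B, w, w', _, hw, hw', hs, hs', _
  | o, [_], B, w, w', _, hw, hw', hs, hs', _ => by
    obtain ⟨a, rfl⟩ := List.length_eq_one_iff.mp (by simpa using hw)
    obtain ⟨a', rfl⟩ := List.length_eq_one_iff.mp (by simpa using hw')
    simp_all
  | o, q₁ :: q₂ :: Q, B, a :: w, a' :: w', hQB, hw, hw', hs, hs', h => by
    classical
    simp only [List.length_cons, List.sum_cons] at hw hw' hs hs'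
    have hsB := B.sortBy_perm (fanKey f g q₁)
    have hq₁ : q₁ ∉ B := hQB q₁ (by simp)
    rw [run, run] at h
    simp only [List.headD_cons, List.tail_cons] at h
    generalize B.sortBy (fanKey f g q₁) = s at hsB h
    have hidx : ∀ c ≤ B.length, ∀ rest,
        ((s.take c).sortBy (diveKey f g q₁) ++ q₁ :: rest).idxOf q₁ = c := by
      intro c hc rest
      have hγ := (s.take c).sortBy_perm (diveKey f g q₁)
      rw [List.idxOf_append_of_notMem fun hm => hq₁ (hsB.mem_iff.mp
          (List.mem_of_mem_take (hγ.mem_iff.mp hm))),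
        List.idxOf_cons_self, hγ.length_eq, List.length_take, hsB.length_eq]
      omega
    obtain rfl : a = a' := by
      simpa only [hidx a (by omega), hidx a' (by omega)] using congrArg (List.idxOf q₁) h
    rw [run_injective q₂ Q (s.drop a) w w'
      (fun q hq hqs => hQB q (by simp [hq]) (hsB.mem_iff.mp (List.mem_of_mem_drop hqs)))
      (by omega) (by omega) (by rw [List.length_drop, hsB.length_eq]; omega) (by rw [List.length_drop, hsB.length_eq]; omega)
      (List.cons.inj (List.cons.inj (List.append_cancel_left h)).2).2]
  | _, _ :: _ :: _, _, [], _, _, hw, _, _, _, _ => by simp at hw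
  | _, _ :: _ :: _, _, _ :: _, [], _, _, hw', _, _, _ => by simp at hw'

variable {f g} {q b p : Pt}

@[simp]
theorem orient_apply : orient f g q b p = (g b - g q) * f p - f b * (g p - g q) := by
  simp [orient]

@[simp]
theorem orient_self : orient f g q b b = 0 := by simp only [orient_apply]; ring

theorem orient_apex (hq : f q = 0) : orient f g q b q = 0 := by simp [hq]

theorem orient_eq_mul_cot_sub (hb : 0 < f b) (hp : 0 < f p) :
    orient f g q b p = f b * f p * (cot f g q b - cot f g q p) := by
  simp only [orient_apply, cot]
  field_simp

theorem orient_eq_zero_of_cot_eq (hb : 0 < f b) (hp : 0 < f p) (h : cot f g q b = cot f g q p) :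
    orient f g q b p = 0 := by
  simp [orient_eq_mul_cot_sub hb hp, h]

theorem orient_pos_of_cot_lt (hb : 0 < f b) (hp : 0 < f p) (h : cot f g q p < cot f g q b) :
    0 < orient f g q b p := by
  rw [orient_eq_mul_cot_sub hb hp]
  exact mul_pos (mul_pos hb hp) (sub_pos.mpr h)

theorem orient_pos_of_g_lt (hb : 0 < f b) (hp : f p = 0) (h : g p < g q) :
    0 < orient f g q b p := by
  simp only [orient_apply, hp]
  nlinarith

theorem mem_lexHalfSpace_orient_iff {I : Set ℝ} (hb : 0 < f b) (hp : 0 < f p) :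
    p ∈ lexHalfSpace (orient f g q b) f I ↔
      cot f g q b < cot f g q p ∨ cot f g q b = cot f g q p ∧ f p ∈ I := by
  have hbp := mul_pos hb hp
  simp only [lexHalfSpace, mem_ofPred_eq, orient_eq_mul_cot_sub hb hp, sub_eq_zero,
    mul_eq_zero, hbp.ne', false_or]
  rw [mul_neg_iff]
  constructor
  · rintro ((⟨-, h⟩ | ⟨h, -⟩) | h)
    · exact Or.inl (sub_neg.mp h)
    · exact absurd h (not_lt.mpr hbp.le)
    · exact Or.inr h
  · rintro (h | h)
    · exact Or.inl (Or.inl ⟨hbp, sub_neg.mpr h⟩)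
    · exact Or.inr h

theorem mem_lexHalfSpace_orient_of_g_lt {I : Set ℝ} (hb : 0 < f b) (hp : f p = 0)
    (h : g q < g p) : p ∈ lexHalfSpace (orient f g q b) f I :=
  Or.inl (by simp only [orient_apply, hp]; nlinarith)

theorem apex_mem_lexHalfSpace_orient {I : Set ℝ} (hq : f q = 0) (hI : (0 : ℝ) ∈ I) :
    q ∈ lexHalfSpace (orient f g q b) f I :=
  Or.inr ⟨orient_apex hq, hq ▸ hI⟩

theorem self_mem_lexHalfSpace_orient {I : Set ℝ} (hI : f b ∈ I) :
    b ∈ lexHalfSpace (orient f g q b) f I :=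
  Or.inr ⟨orient_self, hI⟩

theorem mem_lexHalfSpace_orient_of_fanKey_lt (hb : 0 < f b) (hp : 0 < f p)
    (h : fanKey f g q b < fanKey f g q p) : p ∈ lexHalfSpace (orient f g q b) f (Ioi (f b)) :=
  (mem_lexHalfSpace_orient_iff hb hp).mpr (Prod.Lex.toLex_lt_toLex.mp h)

theorem mem_lexHalfSpace_orient_of_diveKey_lt (hb : 0 < f b) (hp : 0 < f p)
    (h : diveKey f g q b < diveKey f g q p) : p ∈ lexHalfSpace (orient f g q b) f univ :=
  (mem_lexHalfSpace_orient_iff hb hp).mpr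
    ((Prod.Lex.toLex_lt_toLex.mp h).imp_right fun h => ⟨h.1, mem_univ _⟩)

theorem SweptAfter.of_cons {γ : List Pt} (h : SweptAfter f g q (b :: γ) p) :
    SweptAfter f g q γ p :=
  h.imp_right fun h => ⟨h.1, fun c hc => h.2 c (by simp [hc])⟩

theorem SweptAfter.g_lt {γ : List Pt} (h : SweptAfter f g q γ p) (hp : f p = 0) : g q < g p :=
  h.elim And.right fun h => absurd hp h.1.ne'

theorem SweptAfter.mem_lexHalfSpace {γ : List Pt} (h : SweptAfter f g q γ p) (hb : 0 < f b)
    (hbγ : b ∈ γ) : p ∈ lexHalfSpace (orient f g q b) f (Ioi (f b)) :=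
  h.elim (fun h => mem_lexHalfSpace_orient_of_g_lt hb h.1 h.2)
    fun h => mem_lexHalfSpace_orient_of_fanKey_lt hb h.1 (h.2 b hbγ)

theorem IsDiveGroup.of_cons {γ : List Pt} (h : IsDiveGroup f g q (b :: γ)) :
    IsDiveGroup f g q γ :=
  ⟨fun c hc => h.pos c (by simp [hc]), h.sorted.of_cons⟩

theorem forall_mem_lexHalfSpace_orient (hq : f q = 0) {γ rest : List Pt}
    (hγ : IsDiveGroup f g q (b :: γ)) (hrest : ∀ p ∈ rest, SweptAfter f g q (b :: γ) p) :
    ∀ p ∈ b :: γ ++ q :: rest, p ∈ lexHalfSpace (orient f g q b) f univ := by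
  have hb := hγ.pos b (by simp)
  intro p hp
  simp only [List.cons_append, List.mem_cons, List.mem_append] at hp
  rcases hp with rfl | hp | rfl | hp
  · exact self_mem_lexHalfSpace_orient (mem_univ _)
  · exact mem_lexHalfSpace_orient_of_diveKey_lt hb (hγ.pos p (by simp [hp]))
      ((List.pairwise_cons.mp hγ.sorted).1 p hp)
  · exact apex_mem_lexHalfSpace_orient hq (mem_univ _)
  · exact lexHalfSpace_mono _ _ (subset_univ _) ((hrest p hp).mem_lexHalfSpace hb (by simp))

theorem sweptAfter_of_mem_drop {s : List Pt} (hs : s.Pairwise (fanKey f g q · < fanKey f g q ·))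
    (hpos : ∀ p ∈ s, 0 < f p) {a : ℕ} (hp : p ∈ s.drop a) :
    SweptAfter f g q ((s.take a).sortBy (diveKey f g q)) p :=
  Or.inr ⟨hpos p (List.mem_of_mem_drop hp), fun _ hb =>
    hs.rel_of_mem_take_of_mem_drop (((s.take a).sortBy_perm _).mem_iff.mp hb) hp⟩

variable (hsep : ∀ p q, f p = f q → g p = g q → p = q)
include hsep

theorem injOn_orient_eq_zero (hb : 0 < f b) : InjOn f {z | orient f g q b z = 0} := by
  intro z hz z' hz' hf
  simp only [mem_ofPred_eq, orient_apply, hf] at hz hz'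
  refine hsep z z' hf (mul_left_cancel₀ hb.ne' ?_)
  linarith

theorem injOn_fanKey : InjOn (fanKey f g q) {b | 0 < f b} := by
  intro x hx y hy h
  obtain ⟨hcot, hf⟩ := Prod.ext_iff.mp (toLex.injective h)
  refine hsep x y hf ?_
  simp only [cot] at hcot
  rw [show f x = f y from hf, div_left_inj' (ne_of_gt (show 0 < f y from hy))] at hcot
  linarith

theorem injOn_diveKey : InjOn (diveKey f g q) {b | 0 < f b} := by
  intro x hx y hy h
  obtain ⟨hcot, hf⟩ := Prod.ext_iff.mp (toLex.injective h)
  exact injOn_fanKey hsep hx hy (congrArg toLex (Prod.ext hcot (neg_inj.mp hf)))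

theorem isDiveGroup_sortBy {B : List Pt} (hB : ∀ b ∈ B, 0 < f b) (hnd : B.Nodup) :
    IsDiveGroup f g q (B.sortBy (diveKey f g q)) :=
  ⟨fun b hb => hB b ((B.sortBy_perm _).mem_iff.mp hb),
    B.pairwise_sortBy _ hnd ((injOn_diveKey hsep).mono fun b hb => hB b hb)⟩

theorem noncrossing_cons_fan {o : Pt} (ho : f o = 0) {γ : List Pt} (hγ : ∀ b ∈ γ, 0 < f b)
    (hsort : γ.Pairwise (fanKey f g o · < fanKey f g o ·)) : NoncrossingList (o :: γ) := by
  suffices ∀ p, (p = o ∨ 0 < f p ∧ ∀ b ∈ γ, fanKey f g o p < fanKey f g o b) →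
      NoncrossingList (p :: γ) from this o (Or.inl rfl)
  induction γ with
  | nil => exact fun p _ => .of_length_le_two (by simp)
  | cons b γ ih =>
    intro p hp
    have hb := hγ b (by simp)
    obtain ⟨hbγ, hsortγ⟩ := List.pairwise_cons.mp hsort
    refine NoncrossingList.cons_of_convex (ih (fun c hc => hγ c (by simp [hc])) hsortγ b
      (Or.inr ⟨hb, hbγ⟩)) (fun hmem => lt_irrefl _ (hbγ b hmem))
      (convex_lexHalfSpace (orient f g o b) f (convex_Ici (f b))) ?_ ?_
    · rcases hp with rfl | ⟨hp, hpb⟩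
      · exact segment_inter_lexHalfSpace_subset _ _ (orient_apex ho) orient_self
          (injOn_orient_eq_zero hsep hb) (Ici_inter_uIcc_subset (ho ▸ hb.le))
      · rcases Prod.Lex.toLex_lt_toLex.mp (hpb b (by simp)) with h | ⟨h, hf⟩
        · exact segment_inter_lexHalfSpace_subset_of_pos _ _ (orient_pos_of_cot_lt hb hp h)
            orient_self
        · exact segment_inter_lexHalfSpace_subset _ _ (orient_eq_zero_of_cot_eq hb hp h.symm)
            orient_self (injOn_orient_eq_zero hsep hb) (Ici_inter_uIcc_subset hf.le)
    · intro c hc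
      rcases List.mem_cons.mp hc with rfl | hc
      · exact self_mem_lexHalfSpace_orient (mem_Ici.mpr le_rfl)
      · exact lexHalfSpace_mono _ _ Ioi_subset_Ici_self
          (mem_lexHalfSpace_orient_of_fanKey_lt hb (hγ c (by simp [hc])) (hbγ c hc))

theorem noncrossing_cons_apex (hq : f q = 0) {v : Pt} (hv : 0 < f v) {rest : List Pt}
    (hnc : NoncrossingList (q :: rest)) (hqr : q ∉ rest) (hhead : ∀ r ∈ rest.head?, f r = 0)
    (hrest : ∀ p ∈ rest, SweptAfter f g q [v] p) : NoncrossingList (v :: q :: rest) := by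
  refine hnc.cons hqr (NoncrossingList.isChain_edgeAvoids_append (u := [q])
    (convex_lexHalfSpace _ f (convex_Iic (f q)))
    (convex_lexHalfSpace _ f (convex_Ioi (f v)))
    (segment_inter_lexHalfSpace_subset _ _ orient_self (orient_apex hq)
      (injOn_orient_eq_zero hsep hv) (Iic_inter_uIcc_subset (hq ▸ hv.le)))
    (segment_inter_lexHalfSpace_subset _ _ orient_self (orient_apex hq)
      (injOn_orient_eq_zero hsep hv) (Ioi_inter_uIcc_subset le_rfl (hq ▸ hv.le)))
    ?_ (fun p hp => (hrest p hp).mem_lexHalfSpace hv (by simp)) fun r hr =>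
      mem_lexHalfSpace_orient_of_g_lt hv (hhead r hr)
        ((hrest r (List.mem_of_mem_head? hr)).g_lt (hhead r hr)))
  intro p hp
  rw [List.mem_singleton.mp hp]
  exact Or.inr ⟨orient_apex hq, mem_Iic.mpr le_rfl⟩

theorem noncrossing_cons_of_diveKey_lt (hq : f q = 0) {v v' : Pt} {γ rest : List Pt}
    (hγ : IsDiveGroup f g q (v :: v' :: γ)) (hnc : NoncrossingList (v' :: (γ ++ q :: rest)))
    (hv' : v' ∉ γ ++ q :: rest) (hhead : ∀ r ∈ rest.head?, f r = 0)
    (hrest : ∀ p ∈ rest, SweptAfter f g q (v :: v' :: γ) p) :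
    NoncrossingList (v :: v' :: (γ ++ q :: rest)) := by
  have hv := hγ.pos v (by simp)
  have hv'f := hγ.pos v' (by simp)
  refine hnc.cons hv' ?_
  rcases Prod.Lex.toLex_lt_toLex.mp ((List.pairwise_cons.mp hγ.sorted).1 v' (by simp)) with
    hcot | ⟨hcot, hf⟩ <;> dsimp only at hcot
  · -- the ray from `q` through `v'` separates `v` from the rest of the path
    have hK := forall_mem_lexHalfSpace_orient hq hγ.of_cons fun p hp => (hrest p hp).of_cons
    exact NoncrossingList.isChain_edgeAvoids (convex_lexHalfSpace _ f convex_univ)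
      (segment_inter_lexHalfSpace_subset_of_pos _ _ (orient_pos_of_cot_lt hv'f hv hcot)
        orient_self) (by simpa using hK)
  -- `v` and `v'` lie on a common ray from `q`, `v'` nearer to the line; on that ray the rest
  -- of the group lies below `v'` and the points of `rest` lie above `v`
  have hf : f v' < f v := neg_lt_neg_iff.mp hf
  have hv'0 : orient f g q v v' = 0 := orient_eq_zero_of_cot_eq hv hv'f hcot
  rw [show v' :: (γ ++ q :: rest) = (v' :: γ ++ [q]) ++ rest by simp]
  refine NoncrossingList.isChain_edgeAvoids_append
    (convex_lexHalfSpace _ f (convex_Iic (f v'))) (convex_lexHalfSpace _ f (convex_Ioi (f v)))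
    (segment_inter_lexHalfSpace_subset _ _ orient_self hv'0
      (injOn_orient_eq_zero hsep hv) (Iic_inter_uIcc_subset hf.le))
    (segment_inter_lexHalfSpace_subset _ _ orient_self hv'0
      (injOn_orient_eq_zero hsep hv) (Ioi_inter_uIcc_subset le_rfl hf.le))
    ?_ (fun p hp => (hrest p hp).mem_lexHalfSpace hv (by simp)) fun r hr =>
      mem_lexHalfSpace_orient_of_g_lt hv (hhead r hr)
        ((hrest r (List.mem_of_mem_head? hr)).g_lt (hhead r hr))
  intro p hp
  simp only [List.cons_append, List.mem_cons, List.mem_append, List.not_mem_nil,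
    or_false] at hp
  rcases hp with rfl | hp | rfl
  · exact Or.inr ⟨hv'0, mem_Iic.mpr le_rfl⟩
  · refine (mem_lexHalfSpace_orient_iff hv (hγ.pos p (by simp [hp]))).mpr ?_
    rcases Prod.Lex.toLex_lt_toLex.mp
      ((List.pairwise_cons.mp hγ.of_cons.sorted).1 p hp) with h | ⟨h, hfp⟩
    · exact Or.inl (hcot ▸ h)
    · exact Or.inr ⟨hcot.trans h, (neg_lt_neg_iff.mp hfp).le⟩
  · exact apex_mem_lexHalfSpace_orient hq (mem_Iic.mpr hv'f.le)

theorem noncrossing_dive (hq : f q = 0) {rest : List Pt} (hnc : NoncrossingList (q :: rest))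
    (hhead : ∀ r ∈ rest.head?, f r = 0) {γ : List Pt} (hγ : IsDiveGroup f g q γ)
    (hrest : ∀ p ∈ rest, SweptAfter f g q γ p) (hnd : (γ ++ q :: rest).Nodup) :
    NoncrossingList (γ ++ q :: rest) := by
  induction γ with
  | nil => simpa using hnc
  | cons v γ ih =>
    have IH := ih hγ.of_cons (fun p hp => (hrest p hp).of_cons) hnd.of_cons
    rcases γ with _ | ⟨v', γ⟩
    · exact noncrossing_cons_apex hsep hq (hγ.pos v (by simp)) hnc
        (List.nodup_cons.mp hnd.of_cons).1 hhead hrest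
    · simp only [List.cons_append] at IH hnd ⊢
      exact noncrossing_cons_of_diveKey_lt hsep hq hγ IH (List.nodup_cons.mp hnd.of_cons).1
        hhead hrest

theorem noncrossing_cons_line {o : Pt} (ho : f o = 0) (hq : f q = 0) (hoq : g o < g q)
    {rest : List Pt} (hnc : NoncrossingList (q :: rest)) (hqr : q ∉ rest)
    (hrest : ∀ p ∈ rest, (f p = 0 ∧ g q < g p) ∨ 0 < f p) : NoncrossingList (o :: q :: rest) := by
  refine NoncrossingList.cons_of_convex hnc hqr
    (convex_lexHalfSpace (-f) g (convex_Ici (g q)))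
    (segment_inter_lexHalfSpace_subset _ _ (by simp [ho]) (by simp [hq])
      (fun z hz z' hz' => hsep z z' (by simp_all)) (Ici_inter_uIcc_subset hoq.le)) ?_
  intro p hp
  rcases List.mem_cons.mp hp with rfl | hp
  · exact Or.inr ⟨by simp [hq], mem_Ici.mpr le_rfl⟩
  · rcases hrest p hp with ⟨hp, hqp⟩ | hp
    · exact Or.inr ⟨by simp [hp], mem_Ici.mpr hqp.le⟩
    · exact Or.inl (by simpa using hp)

theorem noncrossing_cons_left {o : Pt} (ho : f o = 0) (hq : f q = 0) (hoq : g o < g q)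
    {γ rest : List Pt} (hnc : NoncrossingList (γ ++ q :: rest)) (hnd : (γ ++ q :: rest).Nodup)
    (hγ : IsDiveGroup f g q γ) (hrest : ∀ p ∈ rest, SweptAfter f g q γ p) :
    NoncrossingList (o :: (γ ++ q :: rest)) := by
  rcases γ with _ | ⟨b, γ⟩
  · exact noncrossing_cons_line hsep ho hq hoq hnc (List.nodup_cons.mp hnd).1
      fun p hp => (hrest p hp).imp_right And.left
  · simp only [List.cons_append] at hnc hnd ⊢
    exact NoncrossingList.cons_of_convex hnc (List.nodup_cons.mp hnd).1
      (convex_lexHalfSpace _ f convex_univ)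
      (segment_inter_lexHalfSpace_subset_of_pos _ _
        (orient_pos_of_g_lt (hγ.pos b (by simp)) ho hoq) orient_self)
      (by simpa using forall_mem_lexHalfSpace_orient hq hγ hrest)

theorem noncrossing_run_cons_cons {o q₁ q₂ : Pt} {Q B : List Pt} {w : List ℕ}
    (hQ : ∀ q ∈ q₁ :: q₂ :: Q, f q = 0) (hQg : (q₁ :: q₂ :: Q).Pairwise (g · < g ·))
    (hB : ∀ b ∈ B, 0 < f b) (hnd : (q₁ :: q₂ :: Q ++ B).Nodup)
    (hrec : ∀ B', (∀ b ∈ B', 0 < f b) → (Q ++ B').Nodup →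
      NoncrossingList (q₂ :: run f g q₂ Q B' w.tail)) :
    NoncrossingList (run f g o (q₁ :: q₂ :: Q) B w) ∧
      ∀ o', f o' = 0 → g o' < g q₁ → NoncrossingList (o' :: run f g o (q₁ :: q₂ :: Q) B w) := by
  have hq₁ := hQ q₁ (by simp)
  have hq₂ := hQ q₂ (by simp)
  have hg₁ := (List.pairwise_cons.mp hQg).1
  have hg₂ := (List.pairwise_cons.mp hQg.of_cons).1
  have hBnd := (List.nodup_append.mp hnd).2.1
  have hnd' := (run_perm f g o (q₁ :: q₂ :: Q) B w).nodup_iff.mpr hnd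
  have hsB := B.sortBy_perm (fanKey f g q₁)
  have hsort := B.pairwise_sortBy (fanKey f g q₁) hBnd
    ((injOn_fanKey hsep).mono fun b hb => hB b hb)
  rw [run] at hnd' ⊢
  generalize B.sortBy (fanKey f g q₁) = s at hsB hsort hnd' ⊢
  generalize w.headD 0 = a at hnd' ⊢
  have hpos : ∀ p ∈ s, 0 < f p := fun p hp => hB p (hsB.mem_iff.mp hp)
  have hγ : IsDiveGroup f g q₁ ((s.take a).sortBy (diveKey f g q₁)) :=
    isDiveGroup_sortBy hsep (fun b hb => hpos b (List.mem_of_mem_take hb))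
      ((hsB.nodup_iff.mpr hBnd).sublist (List.take_sublist a s))
  have hrec_mem : ∀ p ∈ run f g q₂ Q (s.drop a) w.tail, p ∈ Q ∨ p ∈ s.drop a := fun p hp =>
    List.mem_append.mp ((run_perm f g q₂ Q (s.drop a) w.tail).mem_iff.mp hp)
  have hline : NoncrossingList (q₁ :: q₂ :: run f g q₂ Q (s.drop a) w.tail) :=
    noncrossing_cons_line hsep hq₁ hq₂ (hg₁ q₂ (by simp))
      (hrec _ (fun b hb => hpos b (List.mem_of_mem_drop hb))
        (((hsB.append_left Q).nodup_iff.mpr hnd.of_cons.of_cons).sublist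
          ((List.drop_sublist a s).append_left Q)))
      (List.nodup_cons.mp (List.nodup_append.mp hnd').2.1.of_cons).1 fun p hp =>
        (hrec_mem p hp).imp (fun hp => ⟨hQ p (by simp [hp]), hg₂ p hp⟩)
          fun hp => hpos p (List.mem_of_mem_drop hp)
  have hrest : ∀ p ∈ q₂ :: run f g q₂ Q (s.drop a) w.tail,
      SweptAfter f g q₁ ((s.take a).sortBy (diveKey f g q₁)) p := by
    intro p hp
    rcases List.mem_cons.mp hp with rfl | hp
    · exact Or.inl ⟨hq₂, hg₁ p (by simp)⟩
    rcases hrec_mem p hp with hp | hp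
    · exact Or.inl ⟨hQ p (by simp [hp]), hg₁ p (by simp [hp])⟩
    · exact sweptAfter_of_mem_drop hsort hpos hp
  have hdive := noncrossing_dive hsep hq₁ hline (by simpa using hq₂) hγ hrest hnd'
  exact ⟨hdive, fun o' ho' hlt => noncrossing_cons_left hsep ho' hq₁ hlt hdive hnd' hγ hrest⟩

theorem noncrossing_cons_run : ∀ (o : Pt) (QL B : List Pt) (w : List ℕ),
    (∀ q ∈ o :: QL, f q = 0) → (o :: QL).Pairwise (g · < g ·) → (∀ b ∈ B, 0 < f b) →
    (QL ++ B).Nodup → NoncrossingList (o :: run f g o QL B w)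
  | o, [], B, w, hQ, _, hB, hnd =>
    noncrossing_cons_fan hsep (hQ o (by simp))
      (fun b hb => hB b ((B.sortBy_perm _).mem_iff.mp hb))
      (B.pairwise_sortBy _ (by simpa using hnd) ((injOn_fanKey hsep).mono fun b hb => hB b hb))
  | o, [q], B, w, hQ, hQg, hB, hnd => by
    have hq := hQ q (by simp)
    have hγ := isDiveGroup_sortBy hsep (q := q) hB (List.nodup_cons.mp hnd).2
    have hnd' := (run_perm f g o [q] B w).nodup_iff.mpr hnd
    exact noncrossing_cons_left hsep (hQ o (by simp)) hq (by simpa using hQg) (rest := [])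
      (noncrossing_dive hsep hq (.of_length_le_two (by simp)) (by simp) hγ (by simp) hnd')
      hnd' hγ (by simp)
  | o, q₁ :: q₂ :: Q, B, w, hQ, hQg, hB, hnd =>
    (noncrossing_run_cons_cons hsep (fun q hq => hQ q (List.mem_cons_of_mem o hq)) hQg.of_cons hB
      hnd fun B' hB' hnd' => noncrossing_cons_run q₂ Q B' w.tail
        (fun q hq => hQ q (by simp_all)) hQg.of_cons.of_cons hB' hnd').2 o
      (hQ o (by simp)) ((List.pairwise_cons.mp hQg).1 q₁ (by simp))

theorem card_sym_le_hamCount {S : Finset Pt} {q₁ q₂ : Pt} {Q B : List Pt}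
    (hQ : ∀ q ∈ q₁ :: q₂ :: Q, f q = 0) (hQg : (q₁ :: q₂ :: Q).Pairwise (g · < g ·))
    (hB : ∀ b ∈ B, 0 < f b) (hS : (q₁ :: q₂ :: Q ++ B).Perm S.toList) :
    Fintype.card (Sym (Fin ((Q.length + 2) / 2 + 1)) B.length) ≤ hamCount S := by
  have hnd := hS.nodup_iff.mpr S.nodup_toList
  set F := fun σ : Sym (Fin ((Q.length + 2) / 2 + 1)) B.length =>
    run f g q₁ (q₁ :: q₂ :: Q) B σ.counts
  have hperm σ : (F σ).Perm (q₁ :: q₂ :: Q ++ B) := run_perm f g _ _ _ _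
  have hnc σ : NoncrossingList (F σ) :=
    (noncrossing_run_cons_cons hsep hQ hQg hB hnd fun B' hB' hnd' =>
      noncrossing_cons_run hsep q₂ Q B' _ (fun q hq => hQ q (by simp_all))
        hQg.of_cons hB' hnd').1
  have hinfix σ : [q₁, q₂] <:+: F σ := by
    simp only [F, run]
    exact ⟨_, _, List.append_assoc _ _ _⟩
  refine card_le_hamCount F
    (fun σ => ⟨(hperm σ).nodup_iff.mpr hnd, fun x => by simp [((hperm σ).trans hS).mem_iff],
      hnc σ⟩)
    (fun σ τ h => Sym.counts_injective (run_injective f g _ _ _ _ _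
      (fun q hq hqB => (List.nodup_append.mp hnd).2.2 q hq q hqB rfl)
      (by simp only [Sym.length_counts, List.length_cons]) (by simp only [Sym.length_counts, List.length_cons])
      (Sym.sum_counts σ) (Sym.sum_counts τ) h)) fun σ τ h => ?_
  have hq₁₂ : q₁ ≠ q₂ := fun h => (List.nodup_cons.mp hnd).1 (by simp [h])
  exact ((hperm σ).nodup_iff.mpr hnd).not_isInfix_swap hq₁₂ (hinfix σ)
    (h ▸ List.reverse_infix.mpr (hinfix τ))

theorem exists_line_upper_split {S : Finset Pt} (hside : ∀ x ∈ S, f x = 0 ∨ 0 < f x) :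
    ∃ L B : List Pt, (∀ q ∈ L, f q = 0) ∧ L.Pairwise (g · < g ·) ∧ (∀ b ∈ B, 0 < f b) ∧
      (L ++ B).Perm S.toList ∧ L.length = {x ∈ (↑S : Set Pt) | f x = 0}.ncard := by
  classical
  have hLperm := ((S.filter (f · = 0)).toList).sortBy_perm g
  refine ⟨_, (S.filter (0 < f ·)).toList, fun q hq => ?_, List.pairwise_sortBy g
    (Finset.nodup_toList (S.filter (f · = 0))) fun p hp q hq => hsep p q ?_, fun b hb => ?_,
    (List.perm_ext_iff_of_nodup ?_ S.nodup_toList).mpr fun x => ?_, ?_⟩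
  · exact (by simpa using hLperm.mem_iff.mp hq : q ∈ S ∧ f q = 0).2
  · simp only [mem_ofPred_eq, Finset.mem_toList, Finset.mem_filter] at hp hq
    rw [hp.2, hq.2]
  · exact (by simpa using hb : b ∈ S ∧ 0 < f b).2
  · refine List.nodup_append.mpr ⟨hLperm.nodup_iff.mpr (Finset.nodup_toList _),
      Finset.nodup_toList _, fun p hp q hq hpq => ?_⟩
    have hp := (Finset.mem_filter.mp (Finset.mem_toList.mp (hLperm.mem_iff.mp hp))).2
    have hq := (Finset.mem_filter.mp (Finset.mem_toList.mp hq)).2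
    exact hq.ne' (hpq ▸ hp)
  · rw [List.mem_append, hLperm.mem_iff]
    simp only [Finset.mem_toList, Finset.mem_filter]
    constructor
    · rintro (h | h) <;> exact h.1
    · exact fun hx => (hside x hx).imp (⟨hx, ·⟩) (⟨hx, ·⟩)
  · rw [hLperm.length_eq, Finset.length_toList, ← Set.ncard_coe_finset]
    simp

end LinePaths

/-- If `S` has `n` points, `ℓ ≥ 2` of which lie on the line `{f = 0}` (for a
nonconstant affine functional `f`) while all remaining points lie strictly on
one side of this line, then `S` has at least `C(n - ⌈ℓ/2⌉, ⌊ℓ/2⌋)` non-crossing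
Hamiltonian paths. -/
theorem stmt15 (S : Finset Pt) (n ℓ : ℕ) (hcard : S.card = n) (hℓ : 2 ≤ ℓ)
    (f : Pt →ᵃ[ℝ] ℝ) (hf : f.linear ≠ 0)
    (hon : {x ∈ (↑S : Set Pt) | f x = 0}.ncard = ℓ)
    (hside : ∀ x ∈ S, f x = 0 ∨ 0 < f x) :
    Nat.choose (n - (ℓ + 1) / 2) (ℓ / 2) ≤ hamCount S := by
  obtain ⟨g, hsep⟩ := exists_complementary_affineMap finrank_euclideanSpace_fin f hf
  obtain ⟨L, B, hL, hLg, hB, hS, hLlen⟩ := LinePaths.exists_line_upper_split hsep hside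
  rw [hon] at hLlen
  have hn : L.length + B.length = n := by
    rw [← hcard, ← List.length_append, hS.length_eq, Finset.length_toList]
  obtain ⟨q₁, q₂, Q, rfl⟩ : ∃ q₁ q₂ Q, L = q₁ :: q₂ :: Q := by
    rcases L with _ | ⟨q₁, _ | ⟨q₂, Q⟩⟩
    · simp only [List.length_nil] at hLlen; omega
    · simp only [List.length_cons, List.length_nil] at hLlen; omega
    · exact ⟨q₁, q₂, Q, rfl⟩
  simp only [List.length_cons] at hLlen hn
  calc (n - (ℓ + 1) / 2).choose (ℓ / 2)
      = Fintype.card (Sym (Fin ((Q.length + 2) / 2 + 1)) B.length) := by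
        rw [Sym.card_sym_eq_choose, Fintype.card_fin,
          show n - (ℓ + 1) / 2 = B.length + ℓ / 2 by omega,
          show (Q.length + 2) / 2 + 1 + B.length - 1 = B.length + ℓ / 2 by omega,
          Nat.choose_symm_add]
    _ ≤ hamCount S := LinePaths.card_sym_le_hamCount hsep hL hLg hB hS
end

section
/- In any surrounding cycle C of a finite planar point set S, every vertex of the convex hull of S is a vertex of C, and every edge of C whose two endpoints are both convex hull vertices of S must be an edge of the convex hull of S. -/
/-- The `i`-th edge of the closed polygonal curve with vertices `v` (indices
taken cyclically). -/
def polyEdge {m : ℕ} (v : Fin (m + 3) → Pt) (i : Fin (m + 3)) : Set Pt :=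
  segment ℝ (v i) (v (i + 1))

/-- `v` lists the vertices, in cyclic order, of a simple polygon: the vertices
are distinct, consecutive edges meet exactly in their common vertex, and
non-adjacent edges are disjoint. -/
def IsSimplePolygon {m : ℕ} (v : Fin (m + 3) → Pt) : Prop :=
  Function.Injective v ∧
  (∀ i : Fin (m + 3), polyEdge v i ∩ polyEdge v (i + 1) = {v (i + 1)}) ∧
  (∀ i j : Fin (m + 3), j ≠ i → j ≠ i + 1 → i ≠ j + 1 →
    polyEdge v i ∩ polyEdge v j = ∅)

/-- The boundary of the polygon with vertex list `v`. -/
def polygonBoundary {m : ℕ} (v : Fin (m + 3) → Pt) : Set Pt :=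
  ⋃ i, polyEdge v i

/-- The interior region of a closed curve `B`: points off `B` whose connected
component in the complement of `B` is bounded. -/
def polygonInterior (B : Set Pt) : Set Pt :=
  {x | x ∉ B ∧ Bornology.IsBounded (connectedComponentIn Bᶜ x)}

/-- The number of polygonalizations of `S`: simple polygons whose vertex set is
exactly `S`, identified by their boundaries. -/
noncomputable def polyCount (S : Finset Pt) : ℕ :=
  {B : Set Pt | ∃ (m : ℕ) (v : Fin (m + 3) → Pt),
    IsSimplePolygon v ∧ Set.range v = (↑S : Set Pt) ∧ B = polygonBoundary v}.ncard

/-! Both parts compare the polygon with the convex hull `K` of its vertices. The closed region of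
the polygon lies in `K`: a point outside `K` is cut off from `K` by an open half-plane, which is
connected, unbounded and misses the boundary. So `K` is also the convex hull of `S`, and every
extreme point of `S` is a vertex. Now let `ab` be an edge with `a`, `b` extreme, and suppose a
point of `ab` is interior to `K`. Then vertices lie strictly on both sides of the line `ab`, so
walking around the polygon from `b` back to `a` some edge not adjacent to `ab` crosses the line.
The crossing point lies in `K`, and since `a`, `b` are extreme, `K` meets the line only in the
segment `ab`: two non-adjacent edges meet, contradicting simplicity. -/

open Set Bornology Filter Topology
open Fin.NatCast

section Convexity

variable {E : Type*} [AddCommGroup E] [Module ℝ E]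

theorem mem_segment_of_extremePoints {K : Set E} {a b : E} (ha : a ∈ K.extremePoints ℝ)
    (hb : b ∈ K.extremePoints ℝ) {t : ℝ} (ht : a + t • (b - a) ∈ K) :
    a + t • (b - a) ∈ segment ℝ a b := by
  set c := a + t • (b - a) with hc
  rcases lt_or_ge t 0 with ht0 | ht0
  · have ht1 : 1 - t ≠ 0 := by linarith
    have hac : a ∈ openSegment ℝ c b :=
      ⟨1 / (1 - t), -t / (1 - t), by apply div_pos <;> linarith, by apply div_pos <;> linarith,
        by field_simp; ring, by rw [hc]; match_scalars <;> field_simp <;> ring⟩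
    rw [((mem_extremePoints.1 ha).2 c ht b hb.1 hac).1]
    exact left_mem_segment ℝ a b
  rcases le_or_gt t 1 with ht1 | ht1
  · exact ⟨1 - t, t, by linarith, ht0, by ring, by module⟩
  · have hbc : b ∈ openSegment ℝ a c :=
      ⟨1 - 1 / t, 1 / t, by rw [sub_pos, div_lt_one] <;> linarith, by positivity, by ring,
        by rw [hc]; match_scalars <;> field_simp; ring⟩
    rw [((mem_extremePoints.1 hb).2 a ha.1 c ht hbc).2]
    exact right_mem_segment ℝ a b

theorem exists_mem_segment_apply_eq (f : E →ₗ[ℝ] ℝ) {p q : E} {r : ℝ}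
    (hr : r ∈ uIcc (f p) (f q)) : ∃ z ∈ segment ℝ p q, f z = r := by
  rw [← segment_eq_uIcc, ← f.coe_toAffineMap, ← image_segment] at hr
  exact hr

theorem mem_extremePoints_convexHull_of_notMem [TopologicalSpace E] [T2Space E]
    [IsTopologicalAddGroup E] [ContinuousSMul ℝ E] [LocallyConvexSpace ℝ E] {s : Set E}
    (hs : s.Finite) {a : E} (has : a ∈ s) (ha : a ∉ convexHull ℝ (s \ {a})) :
    a ∈ (convexHull ℝ s).extremePoints ℝ := by
  by_contra hext
  have hsub : (convexHull ℝ s).extremePoints ℝ ⊆ s \ {a} := fun y hy =>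
    ⟨extremePoints_convexHull_subset hy, fun hya => hext (hya ▸ hy)⟩
  apply ha
  rw [← (hs.sdiff.isClosed_convexHull ℝ).closure_eq]
  refine closure_mono (convexHull_mono hsub) ?_
  rw [closure_convexHull_extremePoints (hs.isCompact_convexHull ℝ) (convex_convexHull ℝ s)]
  exact subset_convexHull ℝ s has

theorem exists_lt_apply_of_mem_interior_convexHull [TopologicalSpace E] [ContinuousAdd E]
    [ContinuousSMul ℝ E] {s : Set E} {x : E} (hx : x ∈ interior (convexHull ℝ s))
    (f : E →ₗ[ℝ] ℝ) (hf : f ≠ 0) : ∃ y ∈ s, f x < f y := by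
  by_contra! h
  have hle : convexHull ℝ s ⊆ {y | f y ≤ f x} :=
    convexHull_min h (convex_halfSpace_le f.isLinear _)
  obtain ⟨w, hw⟩ := LinearMap.surjective_of_ne_zero hf 1
  have hray : Tendsto (fun ε : ℝ => x + ε • w) (𝓝 0) (𝓝 x) :=
    (by fun_prop : Continuous fun ε : ℝ => x + ε • w).tendsto' 0 x (by simp)
  have hnear : ∀ᶠ ε : ℝ in 𝓝[>] 0, x + ε • w ∈ convexHull ℝ s :=
    nhdsWithin_le_nhds (hray.eventually (mem_interior_iff_mem_nhds.1 hx))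
  obtain ⟨ε, hε, hεpos⟩ := (hnear.and self_mem_nhdsWithin).exists
  have := hle hε
  simp only [mem_ofPred_eq, map_add, map_smul, hw, smul_eq_mul, mul_one] at this
  linarith

end Convexity

section Unbounded

variable {F : Type*} [NormedAddCommGroup F] [NormedSpace ℝ F]

theorem not_isBounded_setOf_lt (f : F →L[ℝ] ℝ) (hf : f ≠ 0) (u : ℝ) :
    ¬ IsBounded {y | f y < u} := by
  intro hbdd
  have hsurj : Function.Surjective f :=
    LinearMap.surjective_of_ne_zero (f := (f : F →ₗ[ℝ] ℝ)) fun h =>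
      hf (ContinuousLinearMap.coe_injective h)
  have himage : f '' {y | f y < u} = Iio u := hsurj.image_preimage (Iio u)
  exact not_bddBelow_Iio u (himage ▸ (f.lipschitz.isBounded_image hbdd).bddBelow)

theorem not_isBounded_connectedComponentIn_compl {K B : Set F} (hK : Convex ℝ K)
    (hKc : IsClosed K) (hKne : K.Nonempty) (hBK : B ⊆ K) {x : F} (hx : x ∉ K) :
    ¬ IsBounded (connectedComponentIn Bᶜ x) := by
  obtain ⟨f, u, hfx, hfK⟩ := geometric_hahn_banach_point_closed hK hKc hx
  obtain ⟨y, hy⟩ := hKne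
  have hf : f ≠ 0 := by
    rintro rfl
    have := hfK y hy
    simp only [zero_apply] at hfx this
    linarith
  have hH : {z | f z < u} ⊆ connectedComponentIn Bᶜ x :=
    (convex_halfSpace_lt f.toLinearMap.isLinear u).isPreconnected.subset_connectedComponentIn
      hfx fun z hz hzB => (hfK z (hBK hzB)).not_gt hz
  exact fun hbdd => not_isBounded_setOf_lt f hf u (hbdd.subset hH)

end Unbounded

theorem polygonInterior_subset {K B : Set Pt} (hK : Convex ℝ K) (hKc : IsClosed K)
    (hKne : K.Nonempty) (hBK : B ⊆ K) : polygonInterior B ⊆ K := fun _ hx =>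
  by_contra fun hxK => not_isBounded_connectedComponentIn_compl hK hKc hKne hBK hxK hx.2

namespace Pt

noncomputable def cross (u : Pt) : Pt →L[ℝ] ℝ :=
  u 0 • EuclideanSpace.proj 1 - u 1 • EuclideanSpace.proj 0

@[simp]
theorem cross_apply (u w : Pt) : cross u w = u 0 * w 1 - u 1 * w 0 := by
  simp [cross]

theorem cross_self (u : Pt) : cross u u = 0 := by
  rw [cross_apply]; ring

theorem cross_ne_zero {u : Pt} (hu : u ≠ 0) : cross u ≠ 0 := by
  intro h
  have h0 := cross_apply u (EuclideanSpace.single 0 1)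
  have h1 := cross_apply u (EuclideanSpace.single 1 1)
  simp [h] at h0 h1
  apply hu
  ext i
  fin_cases i <;> simp [h0, ← h1]

theorem exists_eq_smul_of_cross_eq_zero {u w : Pt} (hu : u ≠ 0) (h : cross u w = 0) :
    ∃ t : ℝ, w = t • u := by
  rw [cross_apply] at h
  by_cases hu0 : u 0 = 0
  · have hu1 : u 1 ≠ 0 := fun hu1 => hu (by ext i; fin_cases i <;> simp [hu0, hu1])
    refine ⟨w 1 / u 1, ?_⟩
    ext i
    fin_cases i <;> simp <;> field_simp
    linarith
  · refine ⟨w 0 / u 0, ?_⟩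
    ext i
    fin_cases i <;> simp <;> field_simp
    linarith

theorem mem_segment_of_cross_eq {K : Set Pt} {a b c : Pt} (ha : a ∈ K.extremePoints ℝ)
    (hb : b ∈ K.extremePoints ℝ) (hab : a ≠ b) (hc : c ∈ K)
    (h : cross (b - a) c = cross (b - a) a) : c ∈ segment ℝ a b := by
  obtain ⟨t, ht⟩ := exists_eq_smul_of_cross_eq_zero (sub_ne_zero.2 hab.symm)
    (by rw [map_sub, h, sub_self] : cross (b - a) (c - a) = 0)
  rw [eq_add_of_sub_eq' ht] at hc ⊢
  exact mem_segment_of_extremePoints ha hb hc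

end Pt

theorem exists_mem_uIcc_apply_succ {α : Type*} [LinearOrder α] (g : ℕ → α) {r : α}
    {p q : ℕ} (hpq : p < q) (hr : r ∈ uIcc (g p) (g q)) :
    ∃ t, p ≤ t ∧ t < q ∧ r ∈ uIcc (g t) (g (t + 1)) := by
  induction q, hpq using Nat.le_induction with
  | base => exact ⟨p, le_rfl, p.lt_succ_self, hr⟩
  | succ q hpq ih =>
    rcases uIcc_subset_uIcc_union_uIcc hr with h | h
    · obtain ⟨t, hpt, htq, ht⟩ := ih h
      exact ⟨t, hpt, by omega, ht⟩
    · exact ⟨q, by omega, by omega, h⟩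

theorem Fin.eq_of_add_natCast_eq {n : ℕ} [NeZero n] (i : Fin n) {s t : ℕ} (hs : s < n)
    (ht : t < n) (h : i + (s : Fin n) = i + (t : Fin n)) : s = t := by
  have := congrArg Fin.val (add_left_cancel h)
  rwa [Fin.val_natCast, Fin.val_natCast, Nat.mod_eq_of_lt hs, Nat.mod_eq_of_lt ht] at this

theorem exists_nonadjacent_mem_uIcc {α : Type*} [LinearOrder α] {m : ℕ} (g : Fin (m + 3) → α)
    (i : Fin (m + 3)) {r : α} (hi : g i = r) (hi' : g (i + 1) = r) {k l : Fin (m + 3)}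
    (hk : g k < r) (hl : r < g l) :
    ∃ j, j ≠ i ∧ j ≠ i + 1 ∧ i ≠ j + 1 ∧ r ∈ uIcc (g j) (g (j + 1)) := by
  -- Number the vertices along the cycle starting from `i`: `k` and `l` sit at positions `≥ 2`,
  -- and an edge between two such positions is not adjacent to the edge `i`.
  have hpos : ∀ k, g k ≠ r → ∃ s, 2 ≤ s ∧ s < m + 3 ∧ i + (s : Fin (m + 3)) = k := by
    intro k hk
    refine ⟨(k - i).val, ?_, (k - i).isLt, by simp⟩
    by_contra hlt
    have hki : k = i + ((k - i).val : Fin (m + 3)) := by simp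
    obtain h | h : (k - i).val = 0 ∨ (k - i).val = 1 := by omega
    all_goals rw [h] at hki; simp only [Nat.cast_zero, Nat.cast_one, add_zero] at hki; subst hki
    exacts [hk hi, hk hi']
  obtain ⟨p, hp2, hpn, rfl⟩ := hpos k hk.ne
  obtain ⟨q, hq2, hqn, rfl⟩ := hpos l hl.ne'
  set w : ℕ → α := fun s => g (i + s)
  obtain ⟨t, ht2, htn, ht⟩ :
      ∃ t, 2 ≤ t ∧ t + 1 < m + 3 ∧ r ∈ uIcc (w t) (w (t + 1)) := by
    rcases lt_or_gt_of_ne (fun hpq : p = q => (hk.trans hl).ne (by rw [hpq])) with hpq | hpq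
    · obtain ⟨t, hpt, htq, ht⟩ :=
        exists_mem_uIcc_apply_succ w hpq (mem_uIcc.2 (Or.inl ⟨hk.le, hl.le⟩))
      exact ⟨t, by omega, by omega, ht⟩
    · obtain ⟨t, hpt, htq, ht⟩ :=
        exists_mem_uIcc_apply_succ w hpq (mem_uIcc.2 (Or.inr ⟨hk.le, hl.le⟩))
      exact ⟨t, by omega, by omega, ht⟩
  have hsucc : i + (t : Fin (m + 3)) + 1 = i + ((t + 1 : ℕ) : Fin (m + 3)) := by
    push_cast; rw [add_assoc]
  refine ⟨i + t, fun h => ?_, fun h => ?_, fun h => ?_, by rwa [hsucc]⟩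
  · have := Fin.eq_of_add_natCast_eq i (s := t) (t := 0) (by omega) (by omega) (by simpa using h)
    omega
  · have := Fin.eq_of_add_natCast_eq i (s := t) (t := 1) (by omega) (by omega) (by simpa using h)
    omega
  · have := Fin.eq_of_add_natCast_eq i (s := t + 1) (t := 0) (by omega) (by omega)
      (by rw [← hsucc, ← h]; simp)
    omega

theorem polyEdge_subset_convexHull {m : ℕ} (v : Fin (m + 3) → Pt) (i : Fin (m + 3)) :
    polyEdge v i ⊆ convexHull ℝ (range v) :=
  (convex_convexHull ℝ _).segment_subset (subset_convexHull ℝ _ (mem_range_self _))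
    (subset_convexHull ℝ _ (mem_range_self _))

theorem polygonBoundary_subset_convexHull {m : ℕ} (v : Fin (m + 3) → Pt) :
    polygonBoundary v ⊆ convexHull ℝ (range v) :=
  iUnion_subset (polyEdge_subset_convexHull v)

theorem polygonBoundary_union_polygonInterior_subset_convexHull {m : ℕ}
    (v : Fin (m + 3) → Pt) :
    polygonBoundary v ∪ polygonInterior (polygonBoundary v) ⊆ convexHull ℝ (range v) :=
  union_subset (polygonBoundary_subset_convexHull v)
    (polygonInterior_subset (convex_convexHull ℝ _) ((finite_range v).isClosed_convexHull ℝ)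
      ⟨v 0, subset_convexHull ℝ _ (mem_range_self 0)⟩ (polygonBoundary_subset_convexHull v))

namespace IsSimplePolygon

variable {m : ℕ} {v : Fin (m + 3) → Pt}

theorem apply_ne_apply_add_one (hv : IsSimplePolygon v) (i : Fin (m + 3)) : v i ≠ v (i + 1) :=
  hv.1.ne (by simp)

theorem polyEdge_subset_frontier_convexHull (hv : IsSimplePolygon v) (i : Fin (m + 3))
    (ha : v i ∈ (convexHull ℝ (range v)).extremePoints ℝ)
    (hb : v (i + 1) ∈ (convexHull ℝ (range v)).extremePoints ℝ) :
    polyEdge v i ⊆ frontier (convexHull ℝ (range v)) := by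
  intro x hx
  rw [((finite_range v).isClosed_convexHull ℝ).frontier_eq]
  refine ⟨polyEdge_subset_convexHull v i hx, fun hxint => ?_⟩
  set f := Pt.cross (v (i + 1) - v i)
  have hf : (f : Pt →ₗ[ℝ] ℝ) ≠ 0 := fun h =>
    Pt.cross_ne_zero (sub_ne_zero.2 (hv.apply_ne_apply_add_one i).symm)
      (ContinuousLinearMap.coe_injective h)
  have hfb : f (v (i + 1)) = f (v i) := by
    rw [← sub_eq_zero, ← map_sub, Pt.cross_self]
  have hfx : f x = f (v i) :=
    (convex_hyperplane f.toLinearMap.isLinear _).segment_subset rfl hfb hx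
  obtain ⟨_, ⟨l, rfl⟩, hl⟩ := exists_lt_apply_of_mem_interior_convexHull hxint _ hf
  obtain ⟨_, ⟨k, rfl⟩, hk⟩ :=
    exists_lt_apply_of_mem_interior_convexHull hxint _ (neg_ne_zero.2 hf)
  obtain ⟨j, hji, hji', hij, hr⟩ := exists_nonadjacent_mem_uIcc (fun j => f (v j)) i rfl hfb
    (k := k) (by simpa [hfx] using hk) (by simpa [hfx] using hl)
  obtain ⟨z, hz, hfz⟩ := exists_mem_segment_apply_eq (f : Pt →ₗ[ℝ] ℝ) hr
  have hzi : z ∈ polyEdge v i := Pt.mem_segment_of_cross_eq ha hb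
    (hv.apply_ne_apply_add_one i) (polyEdge_subset_convexHull v j hz) hfz
  exact (hv.2.2 i j hji hji' hij).subset ⟨hzi, hz⟩

end IsSimplePolygon

/-- In any surrounding cycle of a finite planar point set `S` (a simple polygon
with vertices among the points of `S` whose closed region contains all of `S`),
every convex hull vertex of `S` is a vertex of the cycle, and every edge of the
cycle joining two convex hull vertices of `S` lies on the boundary of the
convex hull. -/
theorem stmt19 (S : Finset Pt) {m : ℕ} (v : Fin (m + 3) → Pt)
    (hv : IsSimplePolygon v) (hsub : Set.range v ⊆ (↑S : Set Pt))
    (hsurround : (↑S : Set Pt) ⊆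
      polygonBoundary v ∪ polygonInterior (polygonBoundary v)) :
    (∀ p ∈ S, p ∉ convexHull ℝ ((↑S : Set Pt) \ {p}) → ∃ i, v i = p) ∧
    (∀ i : Fin (m + 3),
      v i ∉ convexHull ℝ ((↑S : Set Pt) \ {v i}) →
      v (i + 1) ∉ convexHull ℝ ((↑S : Set Pt) \ {v (i + 1)}) →
      segment ℝ (v i) (v (i + 1)) ⊆ frontier (convexHull ℝ (↑S : Set Pt))) := by
  have hhull : convexHull ℝ (S : Set Pt) = convexHull ℝ (range v) :=
    (convexHull_mono hsub).antisymm' (convexHull_min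
      (hsurround.trans (polygonBoundary_union_polygonInterior_subset_convexHull v))
      (convex_convexHull ℝ _))
  have hext : ∀ p ∈ (S : Set Pt), p ∉ convexHull ℝ ((S : Set Pt) \ {p}) →
      p ∈ (convexHull ℝ (range v)).extremePoints ℝ := fun p hp h =>
    hhull ▸ mem_extremePoints_convexHull_of_notMem S.finite_toSet hp h
  refine ⟨fun p hp hpext => (extremePoints_convexHull_subset (hext p hp hpext) : p ∈ range v),
    fun i ha hb => ?_⟩
  rw [hhull]
  exact hv.polyEdge_subset_frontier_convexHull i (hext _ (hsub ⟨i, rfl⟩) ha)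
    (hext _ (hsub ⟨i + 1, rfl⟩) hb)
end
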